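/- arXiv:2404.10361 — 8 statements merged into one kernel-verified Lean document; each statement's English description precedes it below -/
import Mathlib

section
/- Let N ≥ 1, a ∈ (0,1), λ_j > 0 for each j ∈ Fin N, let p be an N×N stochastic matrix, and let μ_j be probability measures on [0,∞) with β_j(z) := ∫ e^{-z t} dμ_j(t). For z ∈ ℂ with z ≠ λ_j for all j, set L(z) := diag(λ_j/(λ_j − z)), B(z) := diag(β_j(z)) and H(z) := L(z) · pᵀ · B(z). Fix s ∈ ℂ with Re s ≥ 0 such that a^m s ≠ λ_j for all m ∈ ℕ and all j. Then there exists a constant c < ∞ such that for all n ∈ ℕ and all i, j: |(H(s) H(a s) ⋯ H(a^n s))_{i j}| ≤ c · ((pᵀ)^{n+1})_{i j}; in particular, all entries of the partial products ∏_{m=0}^{n} H(a^m s) are bounded by c uniformly in n. -/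
/-!
Since `|β_j| ≤ 1` on the closed right half-plane, each factor is dominated entrywise,
`|H(a^m s)_{ij}| ≤ c_m (pᵀ)_{ij}` with `c_m = max_i |λ_i / (λ_i - a^m s)|`. Entrywise domination
by nonnegative matrices is multiplicative, so the product is dominated by
`(∏ c_m) (pᵀ)^{n+1}`. As `|a^m s|` decays geometrically, `c_m ≤ 1 + O(a^m)`, hence `∏ c_m` is
bounded, and `(pᵀ)^{n+1}` is column stochastic, so its entries are at most `1`.
-/

open MeasureTheory Matrix Finset Filter

namespace Matrix

variable {l m n R : Type*} [SeminormedRing R]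

theorem norm_mul_apply_le_of_le [Fintype m] {A : Matrix l m R} {B : Matrix m n R}
    {A' : Matrix l m ℝ} {B' : Matrix m n ℝ} (hA : ∀ i k, ‖A i k‖ ≤ A' i k)
    (hB : ∀ k j, ‖B k j‖ ≤ B' k j) (i : l) (j : n) : ‖(A * B) i j‖ ≤ (A' * B') i j :=
  calc ‖∑ k, A i k * B k j‖ ≤ ∑ k, ‖A i k‖ * ‖B k j‖ :=
        (norm_sum_le _ _).trans (sum_le_sum fun _ _ => norm_mul_le _ _)
    _ ≤ ∑ k, A' i k * B' k j := sum_le_sum fun k _ =>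
        mul_le_mul (hA i k) (hB k j) (norm_nonneg _) ((norm_nonneg _).trans (hA i k))

theorem norm_prod_map_range_apply_le [Fintype n] [DecidableEq n] [NormOneClass R]
    {A : ℕ → Matrix n n R} {c : ℕ → ℝ} {Q : Matrix n n ℝ}
    (hA : ∀ m i j, ‖A m i j‖ ≤ c m * Q i j) (k : ℕ) (i j : n) :
    ‖((List.range k).map A).prod i j‖ ≤ (∏ m ∈ range k, c m) * (Q ^ k) i j := by
  induction k generalizing i j with
  | zero => by_cases h : i = j <;> simp [h]
  | succ k ih =>
    have key := norm_mul_apply_le_of_le (A' := (∏ m ∈ range k, c m) • Q ^ k) (B' := c k • Q)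
      ih (hA k) i j
    rw [smul_mul_smul_comm, ← pow_succ, ← prod_range_succ] at key
    rwa [List.range_succ, List.map_append, List.prod_append, List.map_singleton,
      List.prod_singleton]

end Matrix

theorem norm_div_sub_le_one_add {𝕜 : Type*} [NormedField 𝕜] {w z : 𝕜} (hz : 2 * ‖z‖ ≤ ‖w‖) :
    ‖w / (w - z)‖ ≤ 1 + 2 * ‖z‖ / ‖w‖ := by
  rcases eq_or_ne w 0 with rfl | hw
  · simp
  have hr : 0 < ‖w‖ := norm_pos_iff.2 hw
  have hden : ‖w‖ - ‖z‖ ≤ ‖w - z‖ := norm_sub_norm_le w z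
  rw [norm_div, div_le_iff₀ (by linarith)]
  have : 2 * ‖z‖ / ‖w‖ * ‖w‖ = 2 * ‖z‖ := div_mul_cancel₀ _ hr.ne'
  nlinarith [norm_nonneg z, div_nonneg (by positivity : 0 ≤ 2 * ‖z‖) hr.le]

theorem exists_forall_prod_range_le_of_eventually_le_one_add {c b : ℕ → ℝ}
    (hc : ∀ m, 0 ≤ c m) (hb0 : ∀ m, 0 ≤ b m) (hb : Summable b)
    (hcb : ∀ᶠ m in atTop, c m ≤ 1 + b m) :
    ∃ C, ∀ n, ∏ m ∈ range n, c m ≤ C := by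
  set e : ℕ → ℝ := fun m => Real.log (max (c m) 1)
  have he0 : ∀ m, 0 ≤ e m := fun m => Real.log_nonneg (le_max_right _ _)
  have he : Summable e := hb.of_norm_bounded_eventually_nat <| hcb.mono fun m hm => by
    rw [Real.norm_of_nonneg (he0 m)]
    have := Real.log_le_sub_one_of_pos (lt_max_of_lt_right one_pos : (0 : ℝ) < max (c m) 1)
    linarith [max_le hm (le_add_of_nonneg_right (hb0 m))]
  refine ⟨Real.exp (∑' m, e m), fun n => ?_⟩
  calc ∏ m ∈ range n, c m ≤ ∏ m ∈ range n, max (c m) 1 :=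
        prod_le_prod (fun m _ => hc m) fun m _ => le_max_left _ _
    _ = Real.exp (∑ m ∈ range n, e m) := by
        rw [Real.exp_sum]
        exact prod_congr rfl fun m _ => (Real.exp_log (lt_max_of_lt_right one_pos)).symm
    _ ≤ Real.exp (∑' m, e m) := Real.exp_le_exp.2 (he.sum_le_tsum _ fun m _ => he0 m)

theorem exists_forall_prod_range_sup'_norm_div_sub_le {ι 𝕜 : Type*} [Fintype ι] [Nonempty ι]
    [NormedField 𝕜] {w : ι → 𝕜} (hw : ∀ i, w i ≠ 0) {z : ℕ → 𝕜}
    (hz : Summable fun m => ‖z m‖) :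
    ∃ C, ∀ n, ∏ m ∈ range n, univ.sup' univ_nonempty (fun i => ‖w i / (w i - z m)‖) ≤ C := by
  set r := univ.inf' univ_nonempty fun i => ‖w i‖
  have hr : 0 < r := (lt_inf'_iff _).2 fun i _ => norm_pos_iff.2 (hw i)
  have hsmall : ∀ᶠ m in atTop, 2 * ‖z m‖ ≤ r := by
    have h2r : (2 : ℝ) * 0 < r := by simpa using hr
    simpa using (hz.tendsto_atTop_zero.const_mul 2).eventually (ge_mem_nhds h2r)
  refine exists_forall_prod_range_le_of_eventually_le_one_add
    (fun m => (norm_nonneg _).trans (le_sup' (fun i => ‖w i / (w i - z m)‖)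
      (mem_univ (Classical.arbitrary ι))))
    (fun m => by positivity) ((hz.mul_left 2).div_const r) (hsmall.mono fun m hm => ?_)
  refine sup'_le _ _ fun i _ => ?_
  have hri : r ≤ ‖w i‖ := inf'_le _ (mem_univ i)
  calc ‖w i / (w i - z m)‖ ≤ 1 + 2 * ‖z m‖ / ‖w i‖ := norm_div_sub_le_one_add (hm.trans hri)
    _ ≤ 1 + 2 * ‖z m‖ / r := by gcongr

theorem norm_integral_cexp_neg_mul_le_one {μ : Measure ℝ} [IsProbabilityMeasure μ]
    (hμ : μ (Set.Iio 0) = 0) {z : ℂ} (hz : 0 ≤ z.re) :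
    ‖∫ t, Complex.exp (-z * t) ∂μ‖ ≤ 1 := by
  have hpos : ∀ᵐ t ∂μ, 0 ≤ t := by
    rw [ae_iff]
    simp only [not_le]
    exact hμ
  have hbound : ∀ᵐ (t : ℝ) ∂μ, ‖Complex.exp (-z * (t : ℂ))‖ ≤ 1 := hpos.mono fun t ht => by
    rw [Complex.norm_exp, Real.exp_le_one_iff]
    simpa using mul_nonneg hz ht
  simpa using norm_integral_le_of_norm_le_const hbound

theorem stmt_3_general (N : ℕ) (hN : 1 ≤ N) (a : ℝ) (ha : a ∈ Set.Ioo (0:ℝ) 1)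
    (lam : Fin N → ℝ) (hlam : ∀ j, 0 < lam j)
    (p : Fin N → Fin N → ℝ) (hp0 : ∀ i j, 0 ≤ p i j) (hp1 : ∀ i, ∑ j, p i j = 1)
    (μ : Fin N → Measure ℝ) (hμprob : ∀ j, IsProbabilityMeasure (μ j))
    (hμsupp : ∀ j, μ j (Set.Iio 0) = 0)
    (β : Fin N → ℂ → ℂ)
    (hβ : ∀ j z, β j z = ∫ t, Complex.exp (-z * t) ∂(μ j))
    (L B H : ℂ → Matrix (Fin N) (Fin N) ℂ)
    (hL : ∀ z, L z = Matrix.diagonal fun j => (lam j : ℂ) / ((lam j : ℂ) - z))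
    (hB : ∀ z, B z = Matrix.diagonal fun j => β j z)
    (hH : ∀ z, H z = L z * (Matrix.of fun i j => (p j i : ℂ)) * B z)
    (s : ℂ) (hs : 0 ≤ s.re) :
    ∃ c : ℝ, ∀ (n : ℕ) (i j : Fin N),
      ‖(((List.range (n+1)).map fun m => H ((a : ℂ) ^ m * s)).prod) i j‖
          ≤ c * (((Matrix.of fun i j => p j i) ^ (n+1) : Matrix (Fin N) (Fin N) ℝ) i j) ∧
      ‖(((List.range (n+1)).map fun m => H ((a : ℂ) ^ m * s)).prod) i j‖ ≤ c := by
  have : Nonempty (Fin N) := ⟨⟨0, hN⟩⟩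
  set c : ℕ → ℝ := fun m =>
    univ.sup' univ_nonempty fun i => ‖(lam i : ℂ) / (lam i - (a : ℂ) ^ m * s)‖
  set Q : Matrix (Fin N) (Fin N) ℝ := of fun i j => p j i
  have hQ : Q ∈ colStochastic ℝ (Fin N) :=
    mem_colStochastic_iff_sum.2 ⟨fun i j => hp0 j i, hp1⟩
  have hHc : ∀ m i j, ‖H ((a : ℂ) ^ m * s) i j‖ ≤ c m * Q i j := fun m i j => by
    have hβ1 : ‖β j ((a : ℂ) ^ m * s)‖ ≤ 1 := by
      rw [hβ]
      refine norm_integral_cexp_neg_mul_le_one (hμsupp j) ?_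
      rw [← Complex.ofReal_pow, Complex.re_ofReal_mul]
      exact mul_nonneg (pow_nonneg ha.1.le m) hs
    rw [hH, hL, hB, mul_diagonal, diagonal_mul]
    simp only [of_apply, norm_mul, Complex.norm_real, Real.norm_of_nonneg (hp0 j i)]
    exact (mul_le_of_le_one_right (mul_nonneg (norm_nonneg _) (hp0 j i)) hβ1).trans
      (mul_le_mul_of_nonneg_right (le_sup' (fun i => ‖(lam i : ℂ) / (lam i - (a : ℂ) ^ m * s)‖)
        (mem_univ i)) (hp0 j i))
  obtain ⟨C, hC⟩ := exists_forall_prod_range_sup'_norm_div_sub_le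
    (fun i => Complex.ofReal_ne_zero.2 (hlam i).ne') (z := fun m => (a : ℂ) ^ m * s) <| by
      simpa [abs_of_pos ha.1] using (summable_geometric_of_lt_one ha.1.le ha.2).mul_right ‖s‖
  -- the empty product
  have hC1 : 1 ≤ C := by simpa using hC 0
  refine ⟨C, fun n i j => ?_⟩
  have hQn := pow_mem hQ (n + 1)
  have hbound := (norm_prod_map_range_apply_le hHc (n + 1) i j).trans
    (mul_le_mul_of_nonneg_right (hC (n + 1)) (nonneg_of_mem_colStochastic hQn))
  exact ⟨hbound, hbound.trans (mul_le_of_le_one_right (by linarith)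
    (le_one_of_mem_colStochastic hQn))⟩

/-- Lemma 2.2 of the paper: uniform boundedness of the matrix products
`∏_{m=0}^{n} H(a^m s)` with `H(z) = L(z) pᵀ B*(z)`: there is `c < ∞` with
`|(H(s) H(a s) ⋯ H(a^n s))_{i j}| ≤ c ((pᵀ)^{n+1})_{i j} ≤ c`. -/
theorem stmt_3 (N : ℕ) (hN : 1 ≤ N) (a : ℝ) (ha : a ∈ Set.Ioo (0:ℝ) 1)
    (lam : Fin N → ℝ) (hlam : ∀ j, 0 < lam j)
    (p : Fin N → Fin N → ℝ) (hp0 : ∀ i j, 0 ≤ p i j) (hp1 : ∀ i, ∑ j, p i j = 1)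
    (μ : Fin N → Measure ℝ) (hμprob : ∀ j, IsProbabilityMeasure (μ j))
    (hμsupp : ∀ j, μ j (Set.Iio 0) = 0)
    (β : Fin N → ℂ → ℂ)
    (hβ : ∀ j z, β j z = ∫ t, Complex.exp (-z * t) ∂(μ j))
    (L B H : ℂ → Matrix (Fin N) (Fin N) ℂ)
    (hL : ∀ z, L z = Matrix.diagonal fun j => (lam j : ℂ) / ((lam j : ℂ) - z))
    (hB : ∀ z, B z = Matrix.diagonal fun j => β j z)
    (hH : ∀ z, H z = L z * (Matrix.of fun i j => (p j i : ℂ)) * B z)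
    (s : ℂ) (hs : 0 ≤ s.re)
    (hsm : ∀ (m : ℕ) (j : Fin N), (a : ℂ) ^ m * s ≠ (lam j : ℂ)) :
    ∃ c : ℝ, ∀ (n : ℕ) (i j : Fin N),
      ‖(((List.range (n+1)).map fun m => H ((a : ℂ) ^ m * s)).prod) i j‖
          ≤ c * (((Matrix.of fun i j => p j i) ^ (n+1) : Matrix (Fin N) (Fin N) ℝ) i j) ∧
      ‖(((List.range (n+1)).map fun m => H ((a : ℂ) ^ m * s)).prod) i j‖ ≤ c :=
  stmt_3_general N hN a ha lam hlam p hp0 hp1 μ hμprob hμsupp β hβ L B H hL hB hH s hs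
end

section
/- Let N ≥ 1, a ∈ (0,1), λ_j > 0, p an N×N stochastic matrix, and b_j : ℂ → ℂ functions; for z ≠ λ_j set L(z) := diag(λ_j/(λ_j − z)), B(z) := diag(b_j(z)), H(z) := L(z) pᵀ B(z) and F(z) := −Λ^{-1} L(z) with Λ := diag(λ_j). Let D := {s ∈ ℂ : Re s ≥ 0 and a^m s ≠ λ_j for all m ∈ ℕ, j}, let v, π ∈ ℂ^N, and let Z : D → ℂ^N satisfy: (i) Z(s) = H(s) Z(a s) + s F(s) v for all s ∈ D; (ii) Z is continuous at 0 with Z(0) = π. Fix s ∈ D and assume the partial products P_n(s) := ∏_{m=0}^{n−1} H(a^m s) converge entrywise to a matrix Π(s) as n → ∞. Then the series Σ_{n=0}^{∞} a^n P_n(s) (F(a^n s) v) converges and Z(s) = s Σ_{n=0}^{∞} a^n P_n(s) (F(a^n s) v) + Π(s) π. -/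
/-!
Iterating the functional equation along the orbit `a ^ n * s`, which stays in `D`, gives for
every `n`, with `P n` the partial product of the `H (a ^ m * s)`,
`Z s = P n *ᵥ Z (a ^ n * s) + s • ∑ m < n, a ^ m • (P m *ᵥ (F (a ^ m * s) *ᵥ v))`.
The orbit tends to `0` inside `D`, so `Z (a ^ n * s) → π`; and `F` is continuous at `0`, so the
vectors `P n *ᵥ (F (a ^ n * s) *ᵥ v)` converge, hence are bounded, and the series is dominated
by a geometric one. Letting `n → ∞` gives the formula.
-/

open Matrix Filter

theorem Filter.Tendsto.matrix_mulVec {α ι R : Type*} [Fintype ι] [NonUnitalNonAssocSemiring R]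
    [TopologicalSpace R] [IsTopologicalSemiring R] {l : Filter α} {M : α → Matrix ι ι R}
    {w : α → ι → R} {M₀ : Matrix ι ι R} {w₀ : ι → R}
    (hM : Tendsto M l (nhds M₀)) (hw : Tendsto w l (nhds w₀)) :
    Tendsto (fun n => M n *ᵥ w n) l (nhds (M₀ *ᵥ w₀)) :=
  ((continuous_fst.matrix_mulVec continuous_snd).tendsto (M₀, w₀)).comp (hM.prodMk_nhds hw)

theorem Matrix.eq_listProd_mulVec_add_sum_of_recurrence {ι R : Type*} [Fintype ι]
    [DecidableEq ι] [Semiring R] {z g : ℕ → ι → R} {H : ℕ → Matrix ι ι R}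
    (hz : ∀ n, z n = H n *ᵥ z (n + 1) + g n) (n : ℕ) :
    z 0 = ((List.range n).map H).prod *ᵥ z n +
      ∑ m ∈ Finset.range n, ((List.range m).map H).prod *ᵥ g m := by
  induction n with
  | zero => simp
  | succ n ih =>
    rw [ih, hz n, mulVec_add, mulVec_mulVec, Finset.sum_range_succ, List.range_succ,
      List.map_append, List.prod_append]
    simp only [List.map_cons, List.map_nil, List.prod_cons, List.prod_nil, mul_one]
    abel

theorem summable_pow_smul_of_tendsto {𝕜 E : Type*} [NormedField 𝕜] [NormedAddCommGroup E]
    [NormedSpace 𝕜 E] [CompleteSpace E] {r : 𝕜} (hr : ‖r‖ < 1) {w : ℕ → E} {c : E}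
    (hw : Tendsto w atTop (nhds c)) : Summable fun n => r ^ n • w n := by
  obtain ⟨C, hC⟩ := hw.norm.bddAbove_range
  refine .of_norm_bounded ((summable_geometric_of_lt_one (norm_nonneg r) hr).mul_right C)
    fun n => ?_
  rw [norm_smul, norm_pow]
  exact mul_le_mul_of_nonneg_left (hC ⟨n, rfl⟩) (by positivity)

theorem Matrix.continuousAt_diagonal_div_sub {ι : Type*} [DecidableEq ι] {c : ι → ℂ} {z : ℂ}
    (hz : ∀ j, c j ≠ z) : ContinuousAt (fun z => diagonal fun j => c j / (c j - z)) z :=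
  (continuous_id.matrix_diagonal).continuousAt.comp <| continuousAt_pi.2 fun j =>
    continuousAt_const.div (continuousAt_const.sub continuousAt_id) (sub_ne_zero.2 (hz j))

theorem stmt_4_general (N : ℕ) (a : ℝ) (ha : a ∈ Set.Ioo (0:ℝ) 1)
    (lam : Fin N → ℝ) (hlam : ∀ j, 0 < lam j)
    (L H F : ℂ → Matrix (Fin N) (Fin N) ℂ)
    (hL : ∀ z, L z = Matrix.diagonal fun j => (lam j : ℂ) / ((lam j : ℂ) - z))
    (hF : ∀ z, F z = -((Matrix.diagonal fun j => (lam j : ℂ))⁻¹ * L z))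
    (D : Set ℂ)
    (hD : D = {z : ℂ | 0 ≤ z.re ∧ ∀ (m : ℕ) (j : Fin N), (a : ℂ) ^ m * z ≠ (lam j : ℂ)})
    (v π : Fin N → ℂ) (Z : ℂ → (Fin N → ℂ))
    (hZeq : ∀ z ∈ D, Z z = H z *ᵥ Z ((a : ℂ) * z) + z • (F z *ᵥ v))
    (hZcont : ContinuousWithinAt Z D 0) (hZ0 : Z 0 = π)
    (s : ℂ) (hs : s ∈ D)
    (Pmat : Matrix (Fin N) (Fin N) ℂ)
    (hPmat : Tendsto (fun n : ℕ => (((List.range n).map fun m => H ((a : ℂ) ^ m * s)).prod))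
            atTop (nhds Pmat)) :
    ∃ T : Fin N → ℂ,
      HasSum (fun n : ℕ => (a : ℂ) ^ n •
          ((((List.range n).map fun m => H ((a : ℂ) ^ m * s)).prod)
            *ᵥ (F ((a : ℂ) ^ n * s) *ᵥ v))) T ∧
      Z s = s • T + Pmat *ᵥ π := by
  set x : ℕ → ℂ := fun n => (a : ℂ) ^ n * s
  set P : ℕ → Matrix (Fin N) (Fin N) ℂ := fun n => ((List.range n).map fun m => H (x m)).prod
  have hnorm_a : ‖(a : ℂ)‖ < 1 := by simpa [abs_of_pos ha.1] using ha.2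
  have hxD : ∀ n, x n ∈ D := by
    subst hD
    refine fun n => ⟨?_, fun m j => ?_⟩
    · simpa [x, ← Complex.ofReal_pow] using mul_nonneg (pow_nonneg ha.1.le n) hs.1
    · simpa [x, pow_add, mul_assoc] using hs.2 (m + n) j
  have hx0 : Tendsto x atTop (nhds 0) := by
    simpa using (tendsto_pow_atTop_nhds_zero_of_norm_lt_one hnorm_a).mul_const s
  have hZx : Tendsto (fun n => Z (x n)) atTop (nhds π) :=
    hZ0 ▸ hZcont.tendsto.comp (tendsto_nhdsWithin_iff.2 ⟨hx0, .of_forall hxD⟩)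
  have hFcont : ContinuousAt F 0 := by
    rw [funext hF, funext hL]
    exact (continuousAt_const.mul <| continuousAt_diagonal_div_sub fun j => by
      simpa using (hlam j).ne').neg
  obtain ⟨T, hT⟩ := summable_pow_smul_of_tendsto hnorm_a <|
    hPmat.matrix_mulVec <| (hFcont.tendsto.comp hx0).matrix_mulVec tendsto_const_nhds
  refine ⟨T, hT, ?_⟩
  have hrec : ∀ n, Z (x n) = H (x n) *ᵥ Z (x (n + 1)) + x n • (F (x n) *ᵥ v) := fun n => by
    simpa [x, pow_succ, mul_assoc, mul_left_comm] using hZeq (x n) (hxD n)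
  have hunroll : ∀ n, Z s = P n *ᵥ Z (x n) +
      s • ∑ m ∈ Finset.range n, (a : ℂ) ^ m • (P m *ᵥ (F (x m) *ᵥ v)) := fun n => by
    rw [Finset.smul_sum]
    convert eq_listProd_mulVec_add_sum_of_recurrence hrec n using 3 with m
    · simp [x]
    · rw [mulVec_smul, smul_smul, mul_comm]
  have hlim : Z s = Pmat *ᵥ π + s • T :=
    tendsto_nhds_unique (tendsto_const_nhds.congr hunroll)
      ((hPmat.matrix_mulVec hZx).add (hT.tendsto_sum_nat.const_smul s))
  rw [hlim, add_comm]

/-- Theorem 2.3 of the paper (equation (2.7)): the series/infinite-product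
solution `Z(s) = s Σ_{n} a^n P_n(s) (F(a^n s) v) + Π(s) π` of the fixed-point
functional equation `Z(s) = H(s) Z(a s) + s F(s) v`. -/
theorem stmt_4 (N : ℕ) (hN : 1 ≤ N) (a : ℝ) (ha : a ∈ Set.Ioo (0:ℝ) 1)
    (lam : Fin N → ℝ) (hlam : ∀ j, 0 < lam j)
    (p : Fin N → Fin N → ℝ) (hp0 : ∀ i j, 0 ≤ p i j) (hp1 : ∀ i, ∑ j, p i j = 1)
    (b : Fin N → ℂ → ℂ)
    (L B H F : ℂ → Matrix (Fin N) (Fin N) ℂ)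
    (hL : ∀ z, L z = Matrix.diagonal fun j => (lam j : ℂ) / ((lam j : ℂ) - z))
    (hB : ∀ z, B z = Matrix.diagonal fun j => b j z)
    (hH : ∀ z, H z = L z * (Matrix.of fun i j => (p j i : ℂ)) * B z)
    (hF : ∀ z, F z = -((Matrix.diagonal fun j => (lam j : ℂ))⁻¹ * L z))
    (D : Set ℂ)
    (hD : D = {z : ℂ | 0 ≤ z.re ∧ ∀ (m : ℕ) (j : Fin N), (a : ℂ) ^ m * z ≠ (lam j : ℂ)})
    (v π : Fin N → ℂ) (Z : ℂ → (Fin N → ℂ))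
    (hZeq : ∀ z ∈ D, Z z = H z *ᵥ Z ((a : ℂ) * z) + z • (F z *ᵥ v))
    (hZcont : ContinuousWithinAt Z D 0) (hZ0 : Z 0 = π)
    (s : ℂ) (hs : s ∈ D)
    (Pmat : Matrix (Fin N) (Fin N) ℂ)
    (hPmat : Tendsto (fun n : ℕ => (((List.range n).map fun m => H ((a : ℂ) ^ m * s)).prod))
            atTop (nhds Pmat)) :
    ∃ T : Fin N → ℂ,
      HasSum (fun n : ℕ => (a : ℂ) ^ n •
          ((((List.range n).map fun m => H ((a : ℂ) ^ m * s)).prod)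
            *ᵥ (F ((a : ℂ) ^ n * s) *ᵥ v))) T ∧
      Z s = s • T + Pmat *ᵥ π :=
  stmt_4_general N a ha lam hlam L H F hL hF D hD v π Z hZeq hZcont hZ0 s hs Pmat hPmat
end

section
/- For every real λ > 0, every natural number m ≥ 1, every real v ≥ 0 and every complex s with s ≠ λ: ∫_0^∞ e^{-s·max(v−y,0)} (λ^m y^{m−1} e^{-λ y}/(m−1)!) dy = (λ/(λ−s))^m e^{-s v} − (λ/(λ−s))^m e^{-λ v} Σ_{l=0}^{m−1} ((λ−s) v)^l / l! + e^{-λ v} Σ_{l=0}^{m−1} (λ v)^l / l!. -/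
/-!
Write `m = n + 1` and `a = λ - s`. For `y ≤ v` the integrand is `(λ / a) ^ m e^{-s v}` times the
Erlang density with the complex rate `a`, whose integral over `[0, v]` is
`1 - e^{-a v} ∑_{l < m} (a v)^l / l!`, since `-e^{-a y} ∑_{l < m} (a y)^l / l!` is a primitive.
For `y > v` the integrand is the Erlang density itself, whose integral over `(v, ∞)` is
`e^{-λ v} ∑_{l < m} (λ v)^l / l!`: the density has total mass `Γ(m) / (m - 1)! = 1`, and its
integral over `[0, v]` is the previous formula at `a = λ`.
-/

open MeasureTheory Set
open scoped Nat Real Complex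

theorem hasDerivAt_cexp_neg_mul_mul_sum_range (a z : ℂ) (n : ℕ) :
    HasDerivAt (fun z => cexp (-a * z) * ∑ l ∈ Finset.range (n + 1), (a * z) ^ l / l !)
      (-(a ^ (n + 1) * z ^ n * cexp (-a * z) / n !)) z := by
  have hexp : HasDerivAt (fun z => cexp (-a * z)) (-a * cexp (-a * z)) z := by
    simpa [mul_comm] using ((hasDerivAt_id z).const_mul (-a)).cexp
  induction n with
  | zero => simpa using hexp
  | succ n ih =>
    have hpow : HasDerivAt (fun z => (a * z) ^ (n + 1) / (n + 1)!)
        ((n + 1 : ℕ) * (a * z) ^ n * a / (n + 1)!) z := by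
      simpa using (((hasDerivAt_id z).const_mul a).pow (n + 1)).div_const ((n + 1)! : ℂ)
    simp_rw [Finset.sum_range_succ _ (n + 1), mul_add]
    refine (ih.add (hexp.mul hpow)).congr_deriv ?_
    rw [Nat.factorial_succ]
    push_cast
    field_simp
    ring

theorem intervalIntegral_erlang_density (a : ℂ) (n : ℕ) (v : ℝ) :
    ∫ y in (0 : ℝ)..v, a ^ (n + 1) * (y : ℂ) ^ n * cexp (-a * y) / n ! =
      1 - cexp (-a * v) * ∑ l ∈ Finset.range (n + 1), (a * v) ^ l / l ! := by
  have hderiv (y : ℝ) : HasDerivAt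
      (fun y : ℝ => -(cexp (-a * y) * ∑ l ∈ Finset.range (n + 1), (a * y) ^ l / l !))
      (a ^ (n + 1) * (y : ℂ) ^ n * cexp (-a * y) / n !) y :=
    (hasDerivAt_cexp_neg_mul_mul_sum_range a y n).comp_ofReal.neg.congr_deriv (neg_neg _)
  rw [intervalIntegral.integral_eq_sub_of_hasDerivAt (fun y _ => hderiv y)
    ((by fun_prop : Continuous _).intervalIntegrable _ _),
    Finset.sum_range_succ' (fun l => ((a * (0 : ℝ)) ^ l / l ! : ℂ))]
  simp [sub_eq_add_neg, add_comm]

theorem integral_Ioi_zero_erlang_density {lam : ℝ} (hlam : 0 < lam) (n : ℕ) :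
    ∫ y in Ioi (0 : ℝ), lam ^ (n + 1) * y ^ n * rexp (-lam * y) / n ! = 1 := by
  have hgamma := Real.integral_rpow_mul_exp_neg_mul_Ioi (a := n + 1) (by positivity) hlam
  simp only [add_sub_cancel_right, Real.rpow_natCast, Real.Gamma_nat_eq_factorial] at hgamma
  rw [← Nat.cast_add_one, Real.rpow_natCast] at hgamma
  calc ∫ y in Ioi (0 : ℝ), lam ^ (n + 1) * y ^ n * rexp (-lam * y) / n !
      = lam ^ (n + 1) / n ! * ∫ y in Ioi (0 : ℝ), y ^ n * rexp (-(lam * y)) := by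
        rw [← integral_const_mul]
        congr with y
        ring_nf
    _ = 1 := by
      rw [hgamma, one_div_pow]
      field_simp

theorem integrableOn_Ioi_zero_erlang_density {lam : ℝ} (hlam : 0 < lam) (n : ℕ) :
    IntegrableOn (fun y : ℝ => ((lam ^ (n + 1) * y ^ n * rexp (-lam * y) / n ! : ℝ) : ℂ))
      (Ioi 0) :=
  Integrable.of_integral_ne_zero <| by
    rw [integral_complex_ofReal, integral_Ioi_zero_erlang_density hlam]
    exact one_ne_zero

theorem integral_Ioi_erlang_density {lam v : ℝ} (hlam : 0 < lam) (n : ℕ) (hv : 0 ≤ v) :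
    ∫ y in Ioi v, ((lam ^ (n + 1) * y ^ n * rexp (-lam * y) / n ! : ℝ) : ℂ) =
      cexp (-lam * v) * ∑ l ∈ Finset.range (n + 1), ((lam : ℂ) * v) ^ l / l ! := by
  have hmass := congrArg ((↑) : ℝ → ℂ) (integral_Ioi_zero_erlang_density hlam n)
  rw [← integral_complex_ofReal, ← Ioc_union_Ioi_eq_Ioi hv,
    setIntegral_union (Ioc_disjoint_Ioi le_rfl) measurableSet_Ioi
      (by fun_prop : Continuous _).integrableOn_Ioc
      ((integrableOn_Ioi_zero_erlang_density hlam n).mono_set (Ioi_subset_Ioi hv)),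
    ← intervalIntegral.integral_of_le hv] at hmass
  have hcdf : ∫ y in (0 : ℝ)..v, ((lam ^ (n + 1) * y ^ n * rexp (-lam * y) / n ! : ℝ) : ℂ) =
      1 - cexp (-lam * v) * ∑ l ∈ Finset.range (n + 1), ((lam : ℂ) * v) ^ l / l ! := by
    push_cast
    exact intervalIntegral_erlang_density _ _ _
  rw [hcdf, Complex.ofReal_one] at hmass
  linear_combination hmass

theorem cexp_mul_erlang_density_of_le {lam v y : ℝ} {s : ℂ} (hs : s ≠ lam) (n : ℕ)
    (hy : y ≤ v) :
    cexp (-s * (max (v - y) 0 : ℝ)) * ((lam ^ (n + 1) * y ^ n * rexp (-lam * y) / n ! : ℝ) : ℂ) =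
      (lam / (lam - s)) ^ (n + 1) * cexp (-s * v) *
        ((lam - s) ^ (n + 1) * (y : ℂ) ^ n * cexp (-(lam - s) * y) / n !) := by
  have hexp : cexp (-s * (v - y)) * cexp (-lam * y) = cexp (-s * v) * cexp (-(lam - s) * y) := by
    rw [← Complex.exp_add, ← Complex.exp_add]
    ring_nf
  have hpow : (lam / (lam - s)) ^ (n + 1) * (lam - s) ^ (n + 1) = (lam : ℂ) ^ (n + 1) := by
    rw [div_pow, div_mul_cancel₀ _ (pow_ne_zero _ (sub_ne_zero.2 hs.symm))]
  rw [max_eq_left (sub_nonneg.2 hy)]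
  push_cast
  linear_combination (lam ^ (n + 1) * (y : ℂ) ^ n / n !) * hexp -
    ((y : ℂ) ^ n * cexp (-s * v) * cexp (-(lam - s) * y) / n !) * hpow

theorem cexp_mul_erlang_density_of_lt {lam v y : ℝ} (s : ℂ) (n : ℕ) (hy : v < y) :
    cexp (-s * (max (v - y) 0 : ℝ)) * ((lam ^ (n + 1) * y ^ n * rexp (-lam * y) / n ! : ℝ) : ℂ) =
      ((lam ^ (n + 1) * y ^ n * rexp (-lam * y) / n ! : ℝ) : ℂ) := by
  rw [max_eq_right (sub_nonpos.2 hy.le), Complex.ofReal_zero, mul_zero, Complex.exp_zero,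
    one_mul]

/-- Kernel computation of Section 2.2 (mixed-Erlang interarrival times):
Erlang(m, λ) transform of `y ↦ e^{-s·max(v−y,0)}`. -/
theorem stmt_6 (lam : ℝ) (hlam : 0 < lam) (m : ℕ) (hm : 1 ≤ m)
    (v : ℝ) (hv : 0 ≤ v) (s : ℂ) (hs : s ≠ (lam : ℂ)) :
    (∫ y in Set.Ioi (0:ℝ),
        (Complex.exp (-s * (max (v - y) 0 : ℝ)) *
          (lam ^ m * y ^ (m - 1) * Real.exp (-lam * y) / (Nat.factorial (m - 1)) : ℝ) : ℂ))
      = ((lam : ℂ) / ((lam : ℂ) - s)) ^ m * Complex.exp (-s * v)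
        - ((lam : ℂ) / ((lam : ℂ) - s)) ^ m * Complex.exp (-(lam : ℂ) * v) *
            ∑ l ∈ Finset.range m, (((lam : ℂ) - s) * v) ^ l / (Nat.factorial l : ℂ)
        + Complex.exp (-(lam : ℂ) * v) *
            ∑ l ∈ Finset.range m, ((lam : ℂ) * v) ^ l / (Nat.factorial l : ℂ) := by
  obtain ⟨n, rfl⟩ := Nat.exists_eq_add_of_le' hm
  rw [Nat.add_sub_cancel]
  have hfront := fun y (hy : y ∈ Ioc 0 v) => cexp_mul_erlang_density_of_le hs n hy.2
  have htail := fun y (hy : y ∈ Ioi v) => cexp_mul_erlang_density_of_lt (lam := lam) s n hy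
  have hexp : cexp (-s * v) * cexp (-(lam - s) * v) = cexp (-lam * v) := by
    rw [← Complex.exp_add]
    ring_nf
  rw [← Ioc_union_Ioi_eq_Ioi hv, setIntegral_union (Ioc_disjoint_Ioi le_rfl) measurableSet_Ioi
      (by fun_prop : Continuous _).integrableOn_Ioc
      (((integrableOn_Ioi_zero_erlang_density hlam n).mono_set (Ioi_subset_Ioi hv)).congr_fun
        (fun y hy => (htail y hy).symm) measurableSet_Ioi),
    setIntegral_congr_fun measurableSet_Ioc hfront, setIntegral_congr_fun measurableSet_Ioi htail,
    integral_const_mul, ← intervalIntegral.integral_of_le hv, intervalIntegral_erlang_density,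
    integral_Ioi_erlang_density hlam n hv]
  linear_combination (-(lam / (lam - s)) ^ (n + 1) *
    ∑ l ∈ Finset.range (n + 1), ((lam - s) * v) ^ l / l !) * hexp
end

section
/- Let N ≥ 1, a ∈ (0,1), w ≥ 0. On a probability space let (W_n)_{n≥1}, (T_n)_{n≥1}, (S_n)_{n≥1} and (A_n)_{n≥2} be nonnegative random variables and (Y_n)_{n≥1} random variables with values in Fin N such that almost surely W_1 = w, T_1 = 0, and for all n ≥ 1: W_{n+1} = max(a W_n + S_n − A_{n+1}, 0) and T_{n+1} = T_n + A_{n+1}. Let μ_i be probability measures on [0,∞) with β_i(z) := ∫ e^{-z x} dμ_i(x), and α_{i j} finite measures on [0,∞) with A_{i j}(z) := ∫ e^{-z t} dα_{i j}(t). Assume: for every n ≥ 1, all i, j, every bounded measurable φ : ℝ × ℝ → ℂ, and all z₁, z₂ ∈ ℂ with Re z₁ ≥ 0 and Re z₂ ≥ 0, E[φ(W_n, T_n) e^{-z₁ S_n − z₂ A_{n+1}} 1_{Y_n=i} 1_{Y_{n+1}=j}] = E[φ(W_n, T_n) 1_{Y_n=i}] β_i(z₁) A_{i j}(z₂). Set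 p_j := P(Y_1 = j). Then for all r, s, η ∈ ℂ with |r| < 1, Re s = 0 and Re η ≥ 0, the series Z_j(r,s,η) := Σ_{n≥1} r^n E[e^{-s W_n − η T_n} 1_{Y_n=j}] and V_j(r,s,η) := Σ_{n≥1} r^{n+1} E[(1 − e^{-s·min(a W_n + S_n − A_{n+1}, 0)}) e^{-η T_{n+1}} 1_{Y_{n+1}=j}] converge absolutely, and for every j: Z_j(r,s,η) − r p_j e^{-s w} = r Σ_i Z_i(r, a s, η) β_i(s) A_{i j}(η − s) + V_j(r,s,η). -/
open MeasureTheory Set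

/-- Terms of the series `Z_j(r,s,η) = Σ_{n≥1} r^n E[e^{-s W_n − η T_n} 1_{Y_n=j}]`
(indexed so that term `n` corresponds to time `n+1`). -/
noncomputable def ZserTerm {Ω : Type*} [MeasureSpace Ω] {N : ℕ}
    (W T : ℕ → Ω → ℝ) (Y : ℕ → Ω → Fin N) (j : Fin N) (r s η : ℂ) (n : ℕ) : ℂ :=
  r ^ (n + 1) * ∫ ω, Complex.exp (-s * W (n + 1) ω - η * T (n + 1) ω) *
    (if Y (n + 1) ω = j then (1 : ℂ) else 0)

/-- Terms of the series
`V_j(r,s,η) = Σ_{n≥1} r^{n+1} E[(1 − e^{-s·min(a W_n + S_n − A_{n+1}, 0)}) e^{-η T_{n+1}} 1_{Y_{n+1}=j}]`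
(indexed so that term `n` corresponds to time `n+1`). -/
noncomputable def VserTerm {Ω : Type*} [MeasureSpace Ω] {N : ℕ}
    (W S A T : ℕ → Ω → ℝ) (Y : ℕ → Ω → Fin N) (a : ℝ) (j : Fin N)
    (r s η : ℂ) (n : ℕ) : ℂ :=
  r ^ (n + 2) * ∫ ω,
    (1 - Complex.exp (-s * (min (a * W (n + 1) ω + S (n + 1) ω - A (n + 2) ω) 0 : ℝ))) *
      Complex.exp (-η * T (n + 2) ω) * (if Y (n + 2) ω = j then (1 : ℂ) else 0)

/-!
Write `x = a W_n + S_n - A_{n+1}`, so that `W_{n+1} = x⁺` and `T_{n+1} = T_n + A_{n+1}`.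
The identity `e^{-s x⁺} = e^{-s x} + (1 - e^{-s x⁻})` splits
`E[e^{-s W_{n+1} - η T_{n+1}} 1_{Y_{n+1}=j}]` into `E[e^{-a s W_n - η T_n} e^{-s S_n - (η - s) A_{n+1}} 1_{Y_{n+1}=j}]` and the `n`-th term of
`V_j`. Partitioning over `Y_n = i`, the factorization hypothesis turns the first part into
`Σ_i E[e^{-a s W_n - η T_n} 1_{Y_n=i}] β_i(s) A_{ij}(η - s)`. Multiplying by `r^{n+1}` and summing
over `n` gives the equation. Since `Re s = 0`, `Re η ≥ 0` and `T, A ≥ 0`, all integrands are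
bounded, so every series is dominated by a geometric one.
-/

lemma norm_cexp_neg_mul_ofReal_le_one {z : ℂ} {x : ℝ} (hz : 0 ≤ z.re) (hx : 0 ≤ x) :
    ‖Complex.exp (-z * x)‖ ≤ 1 := by
  rw [Complex.norm_exp, Real.exp_le_one_iff]
  simpa using mul_nonneg hz hx

lemma norm_cexp_neg_mul_ofReal_eq_one {z : ℂ} (hz : z.re = 0) (x : ℝ) :
    ‖Complex.exp (-z * x)‖ = 1 := by
  simp [Complex.norm_exp, hz]

lemma norm_cexp_neg_mul_ofReal_sub_le_one {z₁ z₂ : ℂ} (hz₁ : z₁.re = 0) (hz₂ : 0 ≤ z₂.re)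
    (x₁ : ℝ) {x₂ : ℝ} (hx₂ : 0 ≤ x₂) : ‖Complex.exp (-z₁ * x₁ - z₂ * x₂)‖ ≤ 1 := by
  rw [sub_eq_add_neg, Complex.exp_add, norm_mul, norm_cexp_neg_mul_ofReal_eq_one hz₁, one_mul,
    ← neg_mul]
  exact norm_cexp_neg_mul_ofReal_le_one hz₂ hx₂

lemma norm_one_sub_cexp_neg_mul_ofReal_le_two {z : ℂ} (hz : z.re = 0) (x : ℝ) :
    ‖1 - Complex.exp (-z * x)‖ ≤ 2 := by
  calc ‖1 - Complex.exp (-z * x)‖ ≤ ‖(1 : ℂ)‖ + ‖Complex.exp (-z * x)‖ := norm_sub_le _ _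
    _ = 2 := by rw [norm_one, norm_cexp_neg_mul_ofReal_eq_one hz]; norm_num

lemma norm_ite_one_zero_le_one (p : Prop) [Decidable p] : ‖if p then (1 : ℂ) else 0‖ ≤ 1 := by
  split_ifs <;> simp

lemma cexp_neg_mul_max_zero (s : ℂ) (x : ℝ) :
    Complex.exp (-s * (max x 0 : ℝ)) =
      Complex.exp (-s * x) + (1 - Complex.exp (-s * (min x 0 : ℝ))) := by
  rcases le_total 0 x with hx | hx
  · simp [max_eq_left hx, min_eq_right hx]
  · simp [max_eq_right hx, min_eq_left hx]

lemma cexp_workload_step (s η : ℂ) (a w t x y : ℝ) :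
    Complex.exp (-s * (max (a * w + x - y) 0 : ℝ) - η * (t + y : ℝ)) =
      Complex.exp (-(a * s) * w - η * t) * Complex.exp (-s * x - (η - s) * y) +
        (1 - Complex.exp (-s * (min (a * w + x - y) 0 : ℝ))) * Complex.exp (-η * (t + y : ℝ)) := by
  rw [sub_eq_add_neg, Complex.exp_add, cexp_neg_mul_max_zero, add_mul, ← Complex.exp_add,
    ← Complex.exp_add, ← neg_mul]
  congr 2
  push_cast
  ring

lemma summable_of_norm_le_mul_pow {f : ℕ → ℂ} {r : ℝ} (hr₀ : 0 ≤ r) (hr : r < 1) (C : ℝ)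
    (hf : ∀ n, ‖f n‖ ≤ C * r ^ n) : Summable fun n => ‖f n‖ :=
  .of_nonneg_of_le (fun _ => norm_nonneg _) hf
    ((summable_geometric_of_lt_one hr₀ hr).mul_left C)

lemma tsum_sub_eq_of_succ_eq {ι : Type*} [Fintype ι] {z v : ℕ → ℂ} {x : ι → ℕ → ℂ}
    (hz : Summable z) (hx : ∀ i, Summable (x i)) (hv : Summable v) (r : ℂ) (c : ι → ℂ)
    (h : ∀ n, z (n + 1) = r * ∑ i, x i n * c i + v n) :
    ∑' n, z n - z 0 = r * ∑ i, (∑' n, x i n) * c i + ∑' n, v n := by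
  have hxc : ∀ i ∈ Finset.univ, Summable fun n => x i n * c i :=
    fun i _ => (hx i).mul_right (c i)
  rw [hz.tsum_eq_zero_add, add_sub_cancel_left, tsum_congr h,
    ((summable_sum hxc).mul_left r).tsum_add hv, tsum_mul_left, Summable.tsum_finsetSum hxc]
  simp only [tsum_mul_right]

section Probability

variable {Ω ι : Type*} [MeasurableSpace Ω] {μ : Measure Ω} [DecidableEq ι]

lemma norm_integral_le_of_forall_norm_le [IsProbabilityMeasure μ] {f : Ω → ℂ} {C : ℝ}
    (hf : ∀ ω, ‖f ω‖ ≤ C) : ‖∫ ω, f ω ∂μ‖ ≤ C := by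
  simpa using norm_integral_le_of_norm_le_const (μ := μ) (.of_forall hf)

lemma measurable_ite_eq_one_zero [MeasurableSpace ι] [MeasurableSingletonClass ι] {Y : Ω → ι}
    (hY : Measurable Y) (i : ι) : Measurable fun ω => if Y ω = i then (1 : ℂ) else 0 :=
  Measurable.ite (hY (measurableSet_singleton i)) measurable_const measurable_const

lemma integral_eq_sum_integral_mul_ite [Fintype ι] [MeasurableSpace ι]
    [MeasurableSingletonClass ι] {f : Ω → ℂ} (hf : Integrable f μ) {Y : Ω → ι}
    (hY : Measurable Y) :
    ∫ ω, f ω ∂μ = ∑ i, ∫ ω, f ω * (if Y ω = i then (1 : ℂ) else 0) ∂μ := by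
  rw [← integral_finsetSum]
  · simp [Finset.sum_ite_eq]
  · exact fun i _ => hf.mul_bdd (measurable_ite_eq_one_zero hY i).aestronglyMeasurable
      (.of_forall fun _ => norm_ite_one_zero_le_one _)

lemma integral_ite_eq_one_zero [MeasurableSpace ι] [MeasurableSingletonClass ι] {Y : Ω → ι}
    (hY : Measurable Y) (i : ι) :
    ∫ ω, (if Y ω = i then (1 : ℂ) else 0) ∂μ = (μ.real {ω | Y ω = i} : ℂ) := by
  have h := integral_indicator_const (μ := μ) (s := {ω | Y ω = i}) (1 : ℂ)
    (hY (measurableSet_singleton i))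
  rw [Complex.real_smul, mul_one] at h
  rw [← h]
  congr 1 with ω
  simp [Set.indicator_apply]

end Probability

section Workload

variable {Ω : Type*} [MeasureSpace Ω] {N : ℕ}
  {W T S A : ℕ → Ω → ℝ} {Y : ℕ → Ω → Fin N} {s η : ℂ}

lemma ZserTerm_zero {w : ℝ} (hW : ∀ᵐ ω, W 1 ω = w) (hT : ∀ᵐ ω, T 1 ω = 0)
    (hY : Measurable (Y 1)) (j : Fin N) (r : ℂ) :
    ZserTerm W T Y j r s η 0 =
      r * ((volume {ω | Y 1 ω = j}).toReal : ℂ) * Complex.exp (-s * w) := by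
  have h : ∀ᵐ ω, Complex.exp (-s * W 1 ω - η * T 1 ω) * (if Y 1 ω = j then (1 : ℂ) else 0) =
      Complex.exp (-s * w) * (if Y 1 ω = j then (1 : ℂ) else 0) := by
    filter_upwards [hW, hT] with ω hWω hTω
    simp [hWω, hTω]
  rw [ZserTerm, integral_congr_ae h, integral_const_mul, integral_ite_eq_one_zero hY,
    measureReal_def]
  ring

variable [IsProbabilityMeasure (volume : Measure Ω)]

lemma norm_ZserTerm_le (hs : s.re = 0) (hη : 0 ≤ η.re) (j : Fin N) (r : ℂ) {n : ℕ}
    (hT : ∀ ω, 0 ≤ T (n + 1) ω) : ‖ZserTerm W T Y j r s η n‖ ≤ ‖r‖ * ‖r‖ ^ n := by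
  rw [ZserTerm, norm_mul, norm_pow, pow_succ']
  refine mul_le_of_le_one_right (by positivity) (norm_integral_le_of_forall_norm_le fun ω => ?_)
  rw [norm_mul]
  exact mul_le_one₀ (norm_cexp_neg_mul_ofReal_sub_le_one hs hη _ (hT ω)) (norm_nonneg _)
    (norm_ite_one_zero_le_one _)

lemma norm_VserTerm_integrand_le (hs : s.re = 0) (hη : 0 ≤ η.re) (x : ℝ) {t : ℝ} (ht : 0 ≤ t)
    (p : Prop) [Decidable p] :
    ‖(1 - Complex.exp (-s * x)) * Complex.exp (-η * t) * (if p then (1 : ℂ) else 0)‖ ≤ 2 := by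
  rw [norm_mul, norm_mul]
  refine (mul_le_of_le_one_right (by positivity) (norm_ite_one_zero_le_one _)).trans ?_
  exact (mul_le_of_le_one_right (norm_nonneg _) (norm_cexp_neg_mul_ofReal_le_one hη ht)).trans
    (norm_one_sub_cexp_neg_mul_ofReal_le_two hs _)

lemma norm_VserTerm_le (hs : s.re = 0) (hη : 0 ≤ η.re) (a : ℝ) (j : Fin N) (r : ℂ) {n : ℕ}
    (hT : ∀ ω, 0 ≤ T (n + 2) ω) :
    ‖VserTerm W S A T Y a j r s η n‖ ≤ 2 * ‖r‖ ^ 2 * ‖r‖ ^ n := by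
  rw [VserTerm, norm_mul, norm_pow, pow_add,
    show 2 * ‖r‖ ^ 2 * ‖r‖ ^ n = ‖r‖ ^ n * ‖r‖ ^ 2 * 2 by ring]
  exact mul_le_mul_of_nonneg_left
    (norm_integral_le_of_forall_norm_le fun ω => norm_VserTerm_integrand_le hs hη _ (hT ω) _)
    (by positivity)

lemma integrable_cexp_step_mul_ite (a : ℝ) (hs : s.re = 0) (hη : 0 ≤ η.re) {m : ℕ}
    (hWmeas : Measurable (W m)) (hTmeas : Measurable (T m)) (hSmeas : Measurable (S m))
    (hAmeas : Measurable (A (m + 1))) (hYmeas : Measurable (Y (m + 1)))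
    (hT : ∀ ω, 0 ≤ T m ω) (hA : ∀ ω, 0 ≤ A (m + 1) ω) (j : Fin N) :
    Integrable fun ω => Complex.exp (-(a * s) * W m ω - η * T m ω) *
      Complex.exp (-s * S m ω - (η - s) * A (m + 1) ω) *
      (if Y (m + 1) ω = j then (1 : ℂ) else 0) := by
  have hmeas : Measurable fun ω => Complex.exp (-(a * s) * W m ω - η * T m ω) *
      Complex.exp (-s * S m ω - (η - s) * A (m + 1) ω) := by fun_prop
  refine .of_bound (hmeas.mul (measurable_ite_eq_one_zero hYmeas j)).aestronglyMeasurable 1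
    (.of_forall fun ω => ?_)
  simp only [norm_mul]
  exact mul_le_one₀ (mul_le_one₀ (norm_cexp_neg_mul_ofReal_sub_le_one (by simp [hs]) hη _ (hT ω))
    (norm_nonneg _) (norm_cexp_neg_mul_ofReal_sub_le_one hs (by simpa [hs] using hη) _ (hA ω)))
    (norm_nonneg _) (norm_ite_one_zero_le_one _)

lemma integral_cexp_step_mul_ite_eq_sum (a : ℝ) (hs : s.re = 0) (hη : 0 ≤ η.re) {m : ℕ}
    (hWmeas : Measurable (W m)) (hTmeas : Measurable (T m)) (hSmeas : Measurable (S m))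
    (hAmeas : Measurable (A (m + 1))) (hYmeas : ∀ n, Measurable (Y n))
    (hT : ∀ ω, 0 ≤ T m ω) (hA : ∀ ω, 0 ≤ A (m + 1) ω) (j : Fin N) (c : Fin N → ℂ)
    (hfact : ∀ (i : Fin N) (φ : ℝ × ℝ → ℂ), Measurable φ → (∃ C, ∀ x, ‖φ x‖ ≤ C) →
      (∫ ω, φ (W m ω, T m ω) * Complex.exp (-s * S m ω - (η - s) * A (m + 1) ω) *
          (if Y m ω = i then (1 : ℂ) else 0) * (if Y (m + 1) ω = j then (1 : ℂ) else 0))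
        = (∫ ω, φ (W m ω, T m ω) * (if Y m ω = i then (1 : ℂ) else 0)) * c i) :
    ∫ ω, Complex.exp (-(a * s) * W m ω - η * T m ω) *
        Complex.exp (-s * S m ω - (η - s) * A (m + 1) ω) *
        (if Y (m + 1) ω = j then (1 : ℂ) else 0)
      = ∑ i, (∫ ω, Complex.exp (-(a * s) * W m ω - η * T m ω) *
          (if Y m ω = i then (1 : ℂ) else 0)) * c i := by
  -- `t⁺` makes the test function bounded on all of `ℝ × ℝ`; it is harmless since `T m ≥ 0`.
  set φ : ℝ × ℝ → ℂ := fun p => Complex.exp (-(a * s) * p.1 - η * (max p.2 0 : ℝ))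
  have hφ : ∀ ω, φ (W m ω, T m ω) = Complex.exp (-(a * s) * W m ω - η * T m ω) := fun ω => by
    simp only [φ, max_eq_left (hT ω)]
  have hφ_bdd : ∀ p, ‖φ p‖ ≤ 1 := fun p =>
    norm_cexp_neg_mul_ofReal_sub_le_one (by simp [hs]) hη _ (le_max_right _ _)
  rw [integral_eq_sum_integral_mul_ite (integrable_cexp_step_mul_ite a hs hη hWmeas hTmeas hSmeas
    hAmeas (hYmeas _) hT hA j) (hYmeas m)]
  refine Finset.sum_congr rfl fun i _ => ?_
  simp only [← hφ]
  rw [← hfact i φ (by fun_prop) ⟨1, hφ_bdd⟩]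
  congr 1 with ω
  ring

lemma ZserTerm_succ (a : ℝ) (hs : s.re = 0) (hη : 0 ≤ η.re) (r : ℂ) {n : ℕ}
    (hWmeas : ∀ n, Measurable (W n)) (hTmeas : ∀ n, Measurable (T n))
    (hSmeas : ∀ n, Measurable (S n)) (hAmeas : ∀ n, Measurable (A n))
    (hYmeas : ∀ n, Measurable (Y n)) (hT₁ : ∀ ω, 0 ≤ T (n + 1) ω)
    (hT₂ : ∀ ω, 0 ≤ T (n + 2) ω) (hA : ∀ ω, 0 ≤ A (n + 2) ω)
    (hstep : ∀ᵐ ω, W (n + 2) ω = max (a * W (n + 1) ω + S (n + 1) ω - A (n + 2) ω) 0 ∧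
      T (n + 2) ω = T (n + 1) ω + A (n + 2) ω)
    (j : Fin N) (c : Fin N → ℂ)
    (hfact : ∀ (i : Fin N) (φ : ℝ × ℝ → ℂ), Measurable φ → (∃ C, ∀ x, ‖φ x‖ ≤ C) →
      (∫ ω, φ (W (n + 1) ω, T (n + 1) ω) *
          Complex.exp (-s * S (n + 1) ω - (η - s) * A (n + 2) ω) *
          (if Y (n + 1) ω = i then (1 : ℂ) else 0) * (if Y (n + 2) ω = j then (1 : ℂ) else 0))
        = (∫ ω, φ (W (n + 1) ω, T (n + 1) ω) * (if Y (n + 1) ω = i then (1 : ℂ) else 0)) * c i) :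
    ZserTerm W T Y j r s η (n + 1) =
      r * ∑ i, ZserTerm W T Y i r (a * s) η n * c i + VserTerm W S A T Y a j r s η n := by
  set F : Ω → ℂ := fun ω => Complex.exp (-(a * s) * W (n + 1) ω - η * T (n + 1) ω) *
    Complex.exp (-s * S (n + 1) ω - (η - s) * A (n + 2) ω) *
    (if Y (n + 2) ω = j then (1 : ℂ) else 0)
  set G : Ω → ℂ := fun ω =>
    (1 - Complex.exp (-s * (min (a * W (n + 1) ω + S (n + 1) ω - A (n + 2) ω) 0 : ℝ))) *
      Complex.exp (-η * T (n + 2) ω) * (if Y (n + 2) ω = j then (1 : ℂ) else 0)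
  have hsplit : ∀ᵐ ω, Complex.exp (-s * W (n + 2) ω - η * T (n + 2) ω) *
      (if Y (n + 2) ω = j then (1 : ℂ) else 0) = F ω + G ω := by
    filter_upwards [hstep] with ω ⟨hW, hT⟩
    simp only [F, G, hW, hT, cexp_workload_step]
    ring
  have hF_int : Integrable F := integrable_cexp_step_mul_ite a hs hη (hWmeas _) (hTmeas _)
    (hSmeas _) (hAmeas _) (hYmeas _) hT₁ hA j
  have hF : ∫ ω, F ω = ∑ i, (∫ ω, Complex.exp (-(a * s) * W (n + 1) ω - η * T (n + 1) ω) *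
      (if Y (n + 1) ω = i then (1 : ℂ) else 0)) * c i :=
    integral_cexp_step_mul_ite_eq_sum a hs hη (hWmeas _) (hTmeas _) (hSmeas _) (hAmeas _) hYmeas
      hT₁ hA j c hfact
  have hG_int : Integrable G := by
    have hmeas : Measurable fun ω => (1 - Complex.exp
        (-s * (min (a * W (n + 1) ω + S (n + 1) ω - A (n + 2) ω) 0 : ℝ))) *
          Complex.exp (-η * T (n + 2) ω) := by fun_prop
    exact .of_bound (hmeas.mul (measurable_ite_eq_one_zero (hYmeas _) j)).aestronglyMeasurable 2
      (.of_forall fun ω => norm_VserTerm_integrand_le hs hη _ (hT₂ ω) _)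
  rw [ZserTerm, VserTerm, show n + 1 + 1 = n + 2 from rfl, integral_congr_ae hsplit,
    integral_add hF_int hG_int, hF]
  simp only [ZserTerm, mul_add, Finset.mul_sum]
  congr 1
  exact Finset.sum_congr rfl fun i _ => by ring

end Workload

theorem stmt_9_general (N : ℕ) (a : ℝ) (w : ℝ)
    (Ω : Type*) [MeasureSpace Ω] [IsProbabilityMeasure (volume : Measure Ω)]
    (W T S A : ℕ → Ω → ℝ) (Y : ℕ → Ω → Fin N)
    (hWmeas : ∀ n, Measurable (W n)) (hTmeas : ∀ n, Measurable (T n))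
    (hSmeas : ∀ n, Measurable (S n)) (hAmeas : ∀ n, Measurable (A n))
    (hYmeas : ∀ n, Measurable (Y n))
    (hTpos : ∀ n, 1 ≤ n → ∀ ω, 0 ≤ T n ω) (hApos : ∀ n, 2 ≤ n → ∀ ω, 0 ≤ A n ω)
    (hrec : ∀ᵐ ω, W 1 ω = w ∧ T 1 ω = 0 ∧ ∀ n, 1 ≤ n →
      W (n + 1) ω = max (a * W n ω + S n ω - A (n + 1) ω) 0 ∧
      T (n + 1) ω = T n ω + A (n + 1) ω)
    (β : Fin N → ℂ → ℂ) (Am : Fin N → Fin N → ℂ → ℂ)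
    (hfact : ∀ n : ℕ, 1 ≤ n → ∀ (i j : Fin N) (φ : ℝ × ℝ → ℂ), Measurable φ →
      (∃ C, ∀ x, ‖φ x‖ ≤ C) → ∀ z₁ z₂ : ℂ, 0 ≤ z₁.re → 0 ≤ z₂.re →
      (∫ ω, φ (W n ω, T n ω) * Complex.exp (-z₁ * S n ω - z₂ * A (n + 1) ω) *
          (if Y n ω = i then (1 : ℂ) else 0) * (if Y (n + 1) ω = j then (1 : ℂ) else 0))
        = (∫ ω, φ (W n ω, T n ω) * (if Y n ω = i then (1 : ℂ) else 0)) *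
            β i z₁ * Am i j z₂)
    (r s η : ℂ) (hr : ‖r‖ < 1) (hs : s.re = 0) (hη : 0 ≤ η.re) :
    (∀ j, Summable fun n => ‖ZserTerm W T Y j r s η n‖) ∧
    (∀ j, Summable fun n => ‖ZserTerm W T Y j r ((a : ℂ) * s) η n‖) ∧
    (∀ j, Summable fun n => ‖VserTerm W S A T Y a j r s η n‖) ∧
    (∀ j : Fin N,
      (∑' n, ZserTerm W T Y j r s η n) -
          r * ((volume {ω | Y 1 ω = j}).toReal : ℂ) * Complex.exp (-s * w)
        = r * (∑ i, (∑' n, ZserTerm W T Y i r ((a : ℂ) * s) η n) * β i s * Am i j (η - s))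
          + ∑' n, VserTerm W S A T Y a j r s η n) := by
  have hT : ∀ n ω, 0 ≤ T (n + 1) ω := fun n => hTpos (n + 1) n.succ_pos
  have hZ : ∀ s' : ℂ, s'.re = 0 → ∀ j, Summable fun n => ‖ZserTerm W T Y j r s' η n‖ :=
    fun s' hs' j => summable_of_norm_le_mul_pow (norm_nonneg r) hr ‖r‖ fun n =>
      norm_ZserTerm_le hs' hη j r (hT n)
  have hV : ∀ j, Summable fun n => ‖VserTerm W S A T Y a j r s η n‖ :=
    fun j => summable_of_norm_le_mul_pow (norm_nonneg r) hr _ fun n =>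
      norm_VserTerm_le hs hη a j r (hT (n + 1))
  have has : ((a : ℂ) * s).re = 0 := by simp [hs]
  refine ⟨hZ s hs, hZ _ has, hV, fun j => ?_⟩
  have hstep := fun n => hrec.mono fun ω h => h.2.2 (n + 1) n.succ_pos
  have hseries := tsum_sub_eq_of_succ_eq (hZ s hs j).of_norm (fun i => (hZ _ has i).of_norm)
    (hV j).of_norm r (fun i => β i s * Am i j (η - s)) fun n =>
      ZserTerm_succ a hs hη r hWmeas hTmeas hSmeas hAmeas hYmeas (hT n) (hT (n + 1))
        (hApos (n + 2) (by omega)) (hstep n) j _ fun i φ hφ hC =>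
          (hfact (n + 1) n.succ_pos i j φ hφ hC s (η - s) (by simp [hs])
            (by simpa [hs] using hη)).trans (mul_assoc _ _ _)
  rw [ZserTerm_zero (hrec.mono fun ω h => h.1) (hrec.mono fun ω h => h.2.1) (hYmeas 1)] at hseries
  simpa only [mul_assoc] using hseries

/-- Theorem 5.1 of the paper: the Wiener–Hopf-type system of equations for the
transform vector of the transient workload of the Markov-modulated reflected
autoregressive process. -/
theorem stmt_9 (N : ℕ) (hN : 1 ≤ N) (a : ℝ) (ha : a ∈ Set.Ioo (0:ℝ) 1)
    (w : ℝ) (hw : 0 ≤ w)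
    (Ω : Type*) [MeasureSpace Ω] [IsProbabilityMeasure (volume : Measure Ω)]
    (W T S A : ℕ → Ω → ℝ) (Y : ℕ → Ω → Fin N)
    (hWmeas : ∀ n, Measurable (W n)) (hTmeas : ∀ n, Measurable (T n))
    (hSmeas : ∀ n, Measurable (S n)) (hAmeas : ∀ n, Measurable (A n))
    (hYmeas : ∀ n, Measurable (Y n))
    (hWpos : ∀ n, 1 ≤ n → ∀ ω, 0 ≤ W n ω) (hTpos : ∀ n, 1 ≤ n → ∀ ω, 0 ≤ T n ω)
    (hSpos : ∀ n, 1 ≤ n → ∀ ω, 0 ≤ S n ω) (hApos : ∀ n, 2 ≤ n → ∀ ω, 0 ≤ A n ω)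
    (hrec : ∀ᵐ ω, W 1 ω = w ∧ T 1 ω = 0 ∧ ∀ n, 1 ≤ n →
      W (n + 1) ω = max (a * W n ω + S n ω - A (n + 1) ω) 0 ∧
      T (n + 1) ω = T n ω + A (n + 1) ω)
    (μ : Fin N → Measure ℝ) (hμprob : ∀ i, IsProbabilityMeasure (μ i))
    (hμsupp : ∀ i, μ i (Set.Iio 0) = 0)
    (β : Fin N → ℂ → ℂ) (hβ : ∀ i z, β i z = ∫ x, Complex.exp (-z * x) ∂(μ i))
    (α : Fin N → Fin N → Measure ℝ) (hαfin : ∀ i j, IsFiniteMeasure (α i j))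
    (hαsupp : ∀ i j, α i j (Set.Iio 0) = 0)
    (Am : Fin N → Fin N → ℂ → ℂ)
    (hAm : ∀ i j z, Am i j z = ∫ t, Complex.exp (-z * t) ∂(α i j))
    (hfact : ∀ n : ℕ, 1 ≤ n → ∀ (i j : Fin N) (φ : ℝ × ℝ → ℂ), Measurable φ →
      (∃ C, ∀ x, ‖φ x‖ ≤ C) → ∀ z₁ z₂ : ℂ, 0 ≤ z₁.re → 0 ≤ z₂.re →
      (∫ ω, φ (W n ω, T n ω) * Complex.exp (-z₁ * S n ω - z₂ * A (n + 1) ω) *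
          (if Y n ω = i then (1 : ℂ) else 0) * (if Y (n + 1) ω = j then (1 : ℂ) else 0))
        = (∫ ω, φ (W n ω, T n ω) * (if Y n ω = i then (1 : ℂ) else 0)) *
            β i z₁ * Am i j z₂)
    (r s η : ℂ) (hr : ‖r‖ < 1) (hs : s.re = 0) (hη : 0 ≤ η.re) :
    (∀ j, Summable fun n => ‖ZserTerm W T Y j r s η n‖) ∧
    (∀ j, Summable fun n => ‖ZserTerm W T Y j r ((a : ℂ) * s) η n‖) ∧
    (∀ j, Summable fun n => ‖VserTerm W S A T Y a j r s η n‖) ∧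
    (∀ j : Fin N,
      (∑' n, ZserTerm W T Y j r s η n) -
          r * ((volume {ω | Y 1 ω = j}).toReal : ℂ) * Complex.exp (-s * w)
        = r * (∑ i, (∑' n, ZserTerm W T Y i r ((a : ℂ) * s) η n) * β i s * Am i j (η - s))
          + ∑' n, VserTerm W S A T Y a j r s η n) :=
  stmt_9_general N a w Ω W T S A Y hWmeas hTmeas hSmeas hAmeas hYmeas hTpos hApos hrec β Am hfact r
    s η hr hs hη
end

section
/- Let N ≥ 1, let Q be an N×N real matrix with Q_{i j} ≥ 0 for all i ≠ j and Σ_j Q_{i j} = 0 for each i, let λ_i > 0 with Λ := diag(λ_i), and let η ∈ ℂ with Re η ≥ 0. Then every s ∈ ℂ with det((η − s) • 1 + (Λ − Qᵀ).map(coe : ℝ → ℂ)) = 0 satisfies Re s > 0; moreover, such s are exactly the numbers of the form ν + η where ν is an eigenvalue of Λ − Qᵀ. -/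
open Matrix

lemma key_eig_re (N : ℕ)
    (Q : Matrix (Fin N) (Fin N) ℝ)
    (hQoff : ∀ i j, i ≠ j → 0 ≤ Q i j) (hQrow : ∀ i, ∑ j, Q i j = 0)
    (lam : Fin N → ℝ) (hlam : ∀ i, 0 < lam i)
    (ν : ℂ)
    (h : ((Matrix.diagonal lam - Q.transpose).map (Complex.ofReal) -
            ν • (1 : Matrix (Fin N) (Fin N) ℂ)).det = 0) : 0 < ν.re := by
  set A : Matrix (Fin N) (Fin N) ℂ := (Matrix.diagonal lam - Q).map (Complex.ofReal) with hA
  have hdet : (A - ν • 1).det = 0 := by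
    rw [← Matrix.det_transpose]
    convert h using 2
    ext i j
    simp [hA, Matrix.transpose_apply, Matrix.map_apply, Matrix.one_apply,
      Matrix.diagonal_apply, eq_comm]
    split <;> simp_all
  have hEig : Module.End.HasEigenvalue (Matrix.toLin' A) ν := by
    rw [Module.End.hasEigenvalue_iff, Module.End.eigenspace_def, ne_comm]
    refine ne_of_lt (LinearMap.bot_lt_ker_of_det_eq_zero ?_)
    have : Matrix.toLin' A - ν • (1 : Module.End ℂ (Fin N → ℂ)) = Matrix.toLin' (A - ν • 1) := by
      rw [map_sub, _root_.map_smul, Matrix.toLin'_one]; rfl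
    rw [this, LinearMap.det_toLin']
    exact hdet
  obtain ⟨k, hk⟩ := eigenvalue_mem_ball hEig
  rw [mem_closedBall_iff_norm'] at hk
  have hAkk : A k k = ((lam k - Q k k : ℝ) : ℂ) := by
    simp [hA, Matrix.map_apply, Matrix.diagonal_apply]
  have hQkk : Q k k = -∑ j ∈ Finset.univ.erase k, Q k j := by
    have := hQrow k
    rw [← Finset.add_sum_erase _ _ (Finset.mem_univ k)] at this
    linarith
  have hsum : ∑ j ∈ Finset.univ.erase k, ‖A k j‖ = -Q k k := by
    rw [hQkk, neg_neg]
    refine Finset.sum_congr rfl fun j hj => ?_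
    have hjk : k ≠ j := fun e => (Finset.mem_erase.mp hj).1 e.symm
    have : A k j = ((-Q k j : ℝ) : ℂ) := by
      simp [hA, Matrix.map_apply, Matrix.diagonal_apply, hjk]
    rw [this, Complex.norm_real, Real.norm_eq_abs, abs_neg,
      abs_of_nonneg (hQoff k j hjk)]
  have hre : (A k k).re - ν.re ≤ ‖A k k - ν‖ := by
    have := Complex.abs_re_le_norm (A k k - ν)
    simp only [Complex.sub_re] at this
    calc (A k k).re - ν.re ≤ |(A k k).re - ν.re| := le_abs_self _
      _ ≤ ‖A k k - ν‖ := this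
  rw [hsum] at hk
  have : (A k k).re = lam k - Q k k := by rw [hAkk]; simp
  nlinarith [hlam k, hre, hk]

/-- Part 2 of the Lemma in Section 5: for `Re η ≥ 0`, the zeros `s` of
`det((η − s)I + Λ − Qᵀ)` lie in `Re s > 0` and are exactly the numbers
`ν + η` with `ν` an eigenvalue of `Λ − Qᵀ`. -/
theorem stmt_11 (N : ℕ) (hN : 1 ≤ N)
    (Q : Matrix (Fin N) (Fin N) ℝ)
    (hQoff : ∀ i j, i ≠ j → 0 ≤ Q i j) (hQrow : ∀ i, ∑ j, Q i j = 0)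
    (lam : Fin N → ℝ) (hlam : ∀ i, 0 < lam i)
    (η : ℂ) (hη : 0 ≤ η.re) :
    (∀ s : ℂ,
        ((η - s) • (1 : Matrix (Fin N) (Fin N) ℂ) +
          (Matrix.diagonal lam - Q.transpose).map (Complex.ofReal)).det = 0 →
        0 < s.re) ∧
    (∀ s : ℂ,
        ((η - s) • (1 : Matrix (Fin N) (Fin N) ℂ) +
          (Matrix.diagonal lam - Q.transpose).map (Complex.ofReal)).det = 0 ↔
        ∃ ν : ℂ,
          ((Matrix.diagonal lam - Q.transpose).map (Complex.ofReal) -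
            ν • (1 : Matrix (Fin N) (Fin N) ℂ)).det = 0 ∧ s = ν + η) := by
  have hmat : ∀ s : ℂ,
      (η - s) • (1 : Matrix (Fin N) (Fin N) ℂ) +
        (Matrix.diagonal lam - Q.transpose).map (Complex.ofReal) =
      (Matrix.diagonal lam - Q.transpose).map (Complex.ofReal) -
        (s - η) • (1 : Matrix (Fin N) (Fin N) ℂ) := by
    intro s
    rw [sub_smul, sub_smul]; abel
  have hiff : ∀ s : ℂ,
      ((η - s) • (1 : Matrix (Fin N) (Fin N) ℂ) +
          (Matrix.diagonal lam - Q.transpose).map (Complex.ofReal)).det = 0 ↔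
        ∃ ν : ℂ,
          ((Matrix.diagonal lam - Q.transpose).map (Complex.ofReal) -
            ν • (1 : Matrix (Fin N) (Fin N) ℂ)).det = 0 ∧ s = ν + η := by
    intro s
    rw [hmat s]
    constructor
    · intro h; exact ⟨s - η, h, by ring⟩
    · rintro ⟨ν, hν, rfl⟩; simpa using hν
  refine ⟨fun s hs => ?_, hiff⟩
  obtain ⟨ν, hν, rfl⟩ := (hiff s).mp hs
  have := key_eig_re N Q hQoff hQrow lam hlam ν hν
  simp only [Complex.add_re]
  linarith
end

section
/- For every real μ > 0, c > 0, v ≥ 0 and every complex s with Re s > −μ: ∫_0^∞ e^{-s (v + max(x − c v, 0))} μ e^{-μ x} dx = e^{-s v} − (s/(μ + s)) e^{-(s + μ c) v}. -/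
open MeasureTheory Set

/-!
Write `a = c v`. For `x ≤ a` the service time vanishes and the integrand is
`e^{-s v} μ e^{-μ x}`, contributing `e^{-s v} (1 - e^{-μ a})`; for `x > a` it is a single
exponential `μ e^{-s (v - a)} e^{-(μ + s) x}`, integrable because `Re (μ + s) > 0`, contributing
`e^{-s v} μ/(μ + s) e^{-μ a}`. Since `1 - μ/(μ + s) = s/(μ + s)`, the two pieces add up to the
claim.
-/

lemma integral_mul_cexp_neg_mul (w : ℂ) (a b : ℝ) :
    ∫ x in a..b, w * Complex.exp (-w * x) = Complex.exp (-w * a) - Complex.exp (-w * b) := by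
  have hderiv (x : ℝ) :
      HasDerivAt (fun y : ℝ => -Complex.exp (-w * y)) (w * Complex.exp (-w * x)) x := by
    simpa [mul_comm] using ((hasDerivAt_id (x : ℂ)).const_mul (-w)).comp_ofReal.cexp.fun_neg
  rw [intervalIntegral.integral_eq_sub_of_hasDerivAt (fun x _ => hderiv x)
    (by apply Continuous.intervalIntegrable; fun_prop)]
  ring

lemma integral_Ioi_cexp_neg_mul_max_sub_mul_cexp (μ s : ℂ) (hs : 0 < (μ + s).re) {a : ℝ}
    (ha : 0 ≤ a) :
    ∫ x in Ioi 0, Complex.exp (-s * (max (x - a) 0 : ℝ)) * (μ * Complex.exp (-μ * x)) =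
      1 - s / (μ + s) * Complex.exp (-μ * a) := by
  have hμs : μ + s ≠ 0 := fun h => by simp [h] at hs
  have hre : (-(μ + s)).re < 0 := by rw [Complex.neg_re]; linarith
  have h_before : EqOn
      (fun x : ℝ => Complex.exp (-s * (max (x - a) 0 : ℝ)) * (μ * Complex.exp (-μ * x)))
      (fun x : ℝ => μ * Complex.exp (-μ * x)) (Ioc 0 a) := by
    intro x hx
    simp [max_eq_right (sub_nonpos.mpr hx.2)]
  have h_after : EqOn
      (fun x : ℝ => Complex.exp (-s * (max (x - a) 0 : ℝ)) * (μ * Complex.exp (-μ * x)))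
      (fun x : ℝ => μ * Complex.exp (s * a) * Complex.exp (-(μ + s) * x)) (Ioi a) := by
    intro x (hx : a < x)
    simp only [max_eq_left (sub_nonneg.mpr hx.le)]
    rw [mul_left_comm, mul_assoc, ← Complex.exp_add, ← Complex.exp_add]
    push_cast; ring_nf
  have h_int_after : IntegrableOn
      (fun x : ℝ => μ * Complex.exp (s * a) * Complex.exp (-(μ + s) * x)) (Ioi a) :=
    (integrableOn_exp_mul_complex_Ioi hre a).const_mul _
  rw [← Ioc_union_Ioi_eq_Ioi ha, setIntegral_union Ioc_disjoint_Ioi_same measurableSet_Ioi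
      (Continuous.integrableOn_Ioc (by fun_prop))
      (h_int_after.congr_fun h_after.symm measurableSet_Ioi),
    setIntegral_congr_fun measurableSet_Ioc h_before,
    setIntegral_congr_fun measurableSet_Ioi h_after, ← intervalIntegral.integral_of_le ha,
    integral_mul_cexp_neg_mul, integral_const_mul, integral_exp_mul_complex_Ioi hre,
    Complex.ofReal_zero, mul_zero, Complex.exp_zero]
  have h_exp : Complex.exp (s * a) * Complex.exp (-(μ + s) * a) = Complex.exp (-μ * a) := by
    rw [← Complex.exp_add]; ring_nf
  rw [neg_div_neg_eq, mul_assoc, ← mul_div_assoc, h_exp]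
  field_simp
  ring

theorem stmt_14_general (μ c : ℝ) (hc : 0 < c) (v : ℝ) (hv : 0 ≤ v)
    (s : ℂ) (hs : -μ < s.re) :
    (∫ x in Set.Ioi (0:ℝ),
        (Complex.exp (-s * (v + max (x - c * v) 0 : ℝ)) *
          (μ * Real.exp (-μ * x)) : ℂ))
      = Complex.exp (-s * v)
        - (s / ((μ : ℂ) + s)) * Complex.exp (-(s + (μ : ℂ) * (c : ℂ)) * v) := by
  have hre : 0 < ((μ : ℂ) + s).re := by
    simp only [Complex.add_re, Complex.ofReal_re]; linarith
  have h_factor (x : ℝ) :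
      (Complex.exp (-s * (v + max (x - c * v) 0 : ℝ)) * (μ * Real.exp (-μ * x)) : ℂ) =
        Complex.exp (-s * v) * (Complex.exp (-s * (max (x - c * v) 0 : ℝ)) *
          (μ * Complex.exp (-μ * x))) := by
    push_cast
    rw [mul_add, Complex.exp_add]
    ring
  simp_rw [h_factor, integral_const_mul,
    integral_Ioi_cexp_neg_mul_max_sub_mul_cexp _ _ hre (by positivity : 0 ≤ c * v)]
  have h_exp : Complex.exp (-(s + μ * c) * v) =
      Complex.exp (-s * v) * Complex.exp (-μ * ↑(c * v)) := by
    rw [← Complex.exp_add]; push_cast; ring_nf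
  rw [h_exp]
  ring

/-- Kernel computation of Section 6.2: for a customer arriving at workload `v`
with exponential(μ) service requirement and service time `max(x − c v, 0)`,
`∫_0^∞ e^{-s(v + max(x − c v, 0))} μ e^{-μ x} dx = e^{-s v} − (s/(μ+s)) e^{-(s+μc) v}`. -/
theorem stmt_14 (μ c : ℝ) (hμ : 0 < μ) (hc : 0 < c) (v : ℝ) (hv : 0 ≤ v)
    (s : ℂ) (hs : -μ < s.re) :
    (∫ x in Set.Ioi (0:ℝ),
        (Complex.exp (-s * (v + max (x - c * v) 0 : ℝ)) *
          (μ * Real.exp (-μ * x)) : ℂ))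
      = Complex.exp (-s * v)
        - (s / ((μ : ℂ) + s)) * Complex.exp (-(s + (μ : ℂ) * (c : ℂ)) * v) :=
  stmt_14_general μ c hc v hv s hs
end

section
/- Let N ≥ 1, let P be an N×N stochastic matrix admitting a vector π with π_i > 0 for all i and Pᵀ π = π, and let λ_i > 0 with Λ := diag(λ_i). Consider the real matrix A := Λ (1 − Pᵀ). Then: (i) det A = 0 (so 0 is an eigenvalue of A, with eigenvector π); and (ii) every complex eigenvalue z of (the complexification of) A with z ≠ 0 satisfies Re z > 0. -/
/-!
The matrix `Λ(1 - Pᵀ)` has the same characteristic polynomial as `Λ(1 - P)` (transpose, then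
cycle the product). The `k`-th row of `Λ(1 - P)` has diagonal entry `λₖ(1 - Pₖₖ)` and off-diagonal
entries summing in absolute value to the same number, so by Gershgorin every eigenvalue lies in a
closed disc `|z - c| ≤ c` with `c ≥ 0`; such a disc meets the imaginary axis only at `0`.
-/

open Matrix

theorem Complex.re_pos_of_mem_closedBall_self {c : ℝ} {z : ℂ}
    (hz : z ∈ Metric.closedBall (c : ℂ) c) (hz0 : z ≠ 0) : 0 < z.re := by
  have hc : 0 ≤ c := Metric.nonempty_closedBall.1 ⟨z, hz⟩
  have hdist : ‖z - c‖ ^ 2 ≤ c ^ 2 :=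
    pow_le_pow_left₀ (norm_nonneg _) (mem_closedBall_iff_norm.1 hz) 2
  rw [Complex.sq_norm, Complex.normSq_apply, Complex.sub_re, Complex.sub_im,
    Complex.ofReal_re, Complex.ofReal_im] at hdist
  have hnorm : 0 < z.re * z.re + z.im * z.im := by
    rw [← Complex.normSq_apply]
    exact Complex.normSq_pos.2 hz0
  nlinarith

namespace Matrix

variable {n : Type*} [Fintype n] [DecidableEq n]

theorem isRoot_charpoly_iff_det_sub_smul_eq_zero {R : Type*} [CommRing R] (M : Matrix n n R)
    (z : R) : M.charpoly.IsRoot z ↔ (M - z • (1 : Matrix n n R)).det = 0 := by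
  rw [Polynomial.IsRoot, eval_charpoly, ← neg_sub, det_neg, scalar_apply, ← smul_one_eq_diagonal]
  exact (isUnit_neg_one.pow _).mul_right_eq_zero

theorem charpoly_mul_transpose_of_transpose_eq {R : Type*} [CommRing R] {X : Matrix n n R}
    (hX : Xᵀ = X) (Y : Matrix n n R) : (X * Yᵀ).charpoly = (X * Y).charpoly := by
  rw [charpoly_mul_comm, ← charpoly_transpose, transpose_mul, transpose_transpose, hX]

theorem re_pos_of_hasEigenvalue {M : Matrix n n ℝ}
    (hM : ∀ k, ∑ j ∈ Finset.univ.erase k, |M k j| ≤ M k k) {z : ℂ}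
    (hz : Module.End.HasEigenvalue (toLin' (M.map Complex.ofReal)) z) (hz0 : z ≠ 0) :
    0 < z.re := by
  obtain ⟨k, hk⟩ := eigenvalue_mem_ball hz
  refine Complex.re_pos_of_mem_closedBall_self (Metric.closedBall_subset_closedBall ?_ hk) hz0
  simpa only [map_apply, Complex.norm_real, Real.norm_eq_abs] using hM k

theorem sum_abs_diagonal_mul_one_sub_of_stochastic {P : Matrix n n ℝ} (hP0 : ∀ i j, 0 ≤ P i j)
    (hP1 : ∀ i, ∑ j, P i j = 1) {lam : n → ℝ} (hlam : ∀ i, 0 ≤ lam i) (k : n) :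
    ∑ j ∈ Finset.univ.erase k, |(diagonal lam * (1 - P)) k j| =
      (diagonal lam * (1 - P)) k k := by
  have hoff : ∀ j ∈ Finset.univ.erase k, |(diagonal lam * (1 - P)) k j| = lam k * P k j := by
    intro j hj
    rw [diagonal_mul, sub_apply, one_apply_ne (Finset.ne_of_mem_erase hj).symm, zero_sub,
      mul_neg, abs_neg, abs_of_nonneg (mul_nonneg (hlam k) (hP0 k j))]
  rw [Finset.sum_congr rfl hoff, ← Finset.mul_sum, Finset.sum_erase_eq_sub (Finset.mem_univ k),
    hP1 k, diagonal_mul, sub_apply, one_apply_eq]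

end Matrix

/-- Lemma of Section 6.2: for `Λ = diag(λ_i)` with `λ_i > 0` and a stochastic
matrix `P` with positive stationary vector `π`, the matrix `A = Λ(1 − Pᵀ)` is
singular (with `A π = 0`), and every nonzero complex eigenvalue of `A` has
positive real part. -/
theorem stmt_16 (N : ℕ) (hN : 1 ≤ N)
    (P : Matrix (Fin N) (Fin N) ℝ)
    (hP0 : ∀ i j, 0 ≤ P i j) (hP1 : ∀ i, ∑ j, P i j = 1)
    (π : Fin N → ℝ) (hπ : ∀ i, 0 < π i) (hπstat : P.transpose *ᵥ π = π)
    (lam : Fin N → ℝ) (hlam : ∀ i, 0 < lam i)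
    (A : Matrix (Fin N) (Fin N) ℝ)
    (hA : A = Matrix.diagonal lam * (1 - P.transpose)) :
    A.det = 0 ∧ A *ᵥ π = 0 ∧
      ∀ z : ℂ, z ≠ 0 →
        (A.map (Complex.ofReal) - z • (1 : Matrix (Fin N) (Fin N) ℂ)).det = 0 →
        0 < z.re := by
  have hAπ : A *ᵥ π = 0 := by
    rw [hA, ← mulVec_mulVec, sub_mulVec, one_mulVec, hπstat, sub_self, mulVec_zero]
  have hπ0 : π ≠ 0 := fun h => (hπ ⟨0, hN⟩).ne' (congrFun h _)
  refine ⟨exists_mulVec_eq_zero_iff.1 ⟨π, hπ0, hAπ⟩, hAπ, fun z hz0 hz => ?_⟩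
  have hcharpoly : A.charpoly = (diagonal lam * (1 - P)).charpoly := by
    rw [hA, ← transpose_one, ← transpose_sub, transpose_one,
      charpoly_mul_transpose_of_transpose_eq (diagonal_transpose lam)]
  change ((A.map Complex.ofRealHom) - z • 1).det = 0 at hz
  rw [← isRoot_charpoly_iff_det_sub_smul_eq_zero, charpoly_map, hcharpoly, ← charpoly_map,
    ← charpoly_toLin', ← Module.End.hasEigenvalue_iff_isRoot_charpoly] at hz
  refine re_pos_of_hasEigenvalue (fun k => ?_) hz hz0
  exact (sum_abs_diagonal_mul_one_sub_of_stochastic hP0 hP1 (fun i => (hlam i).le) k).le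
end

section
/- Let N ≥ 1, a ∈ (0,1), λ_j > 0 with Λ := diag(λ_j), let p be an N×N stochastic matrix, let v, π ∈ ℂ^N, let 0 < ε < min_j λ_j, and let b_j : (−ε, ε) → ℂ be differentiable at 0 with b_j(0) = 1. Set L(s) := diag(λ_j/(λ_j − s)), B(s) := diag(b_j(s)) and H(s) := L(s) pᵀ B(s) for s ∈ (−ε, ε). Suppose Z : (−ε, ε) → ℂ^N is differentiable at 0 with Z(0) = π and satisfies Z(s) = H(s) Z(a s) − s Λ^{-1} L(s) v for all s ∈ (−ε, ε). Then (1 − a pᵀ) Z'(0) = (Λ^{-1} pᵀ + pᵀ B'(0)) π − Λ^{-1} v, where B'(0) := diag(b_j'(0)); consequently, if 1 − a pᵀ is invertible, the mean-workload vector M := −Z'(0) equals (a pᵀ − 1)^{-1} ((Λ^{-1} pᵀ + pᵀ B'(0)) π − Λ^{-1} v). -/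
/-!
Differentiate the functional equation `Z(s) = H(s) Z(a s) - s Λ⁻¹ L(s) v` at `s = 0`. Since
`L(0) = B(0) = 1`, the product rule gives `H(0) = pᵀ` and `H'(0) = Λ⁻¹ pᵀ + pᵀ B'(0)`; the chain
rule turns `Z(a s)` into `a Z'(0)`, and the last term contributes `Λ⁻¹ v`. This yields
`Z'(0) = (Λ⁻¹ pᵀ + pᵀ B'(0)) π + a pᵀ Z'(0) - Λ⁻¹ v`, which rearranges to the claim.
-/

open Matrix Filter Topology

namespace Matrix

theorem inv_diagonal_of_ne_zero {K n : Type*} [Field K] [Fintype n] [DecidableEq n]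
    {c : n → K} (hc : ∀ j, c j ≠ 0) : (diagonal c)⁻¹ = diagonal fun j => (c j)⁻¹ := by
  refine inv_eq_right_inv ?_
  rw [diagonal_mul_diagonal, ← diagonal_one]
  exact congrArg diagonal (funext fun j => mul_inv_cancel₀ (hc j))

section EntrywiseDeriv

variable {𝕜 R m n l : Type*} [NontriviallyNormedField 𝕜] [NormedCommRing R] [NormedAlgebra 𝕜 R]
  {x : 𝕜}

theorem hasDerivAt_diagonal_apply [DecidableEq n] {f : 𝕜 → n → R} {f' : n → R}
    (hf : ∀ i, HasDerivAt (fun y => f y i) (f' i) x) (i j : n) :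
    HasDerivAt (fun y => diagonal (f y) i j) (diagonal f' i j) x := by
  rcases eq_or_ne i j with rfl | hij
  · simpa using hf i
  · simpa [diagonal_apply_ne _ hij] using hasDerivAt_const x (0 : R)

theorem hasDerivAt_mul_apply [Fintype n] {A : 𝕜 → Matrix m n R} {B : 𝕜 → Matrix n l R}
    {A' : Matrix m n R} {B' : Matrix n l R}
    (hA : ∀ i j, HasDerivAt (fun y => A y i j) (A' i j) x)
    (hB : ∀ j k, HasDerivAt (fun y => B y j k) (B' j k) x) (i : m) (k : l) :
    HasDerivAt (fun y => (A y * B y) i k) ((A' * B x + A x * B') i k) x := by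
  simp only [mul_apply, add_apply, ← Finset.sum_add_distrib]
  exact HasDerivAt.fun_sum fun j _ => (hA i j).mul (hB j k)

theorem hasDerivAt_mulVec [Fintype m] [Fintype n] {A : 𝕜 → Matrix m n R} {A' : Matrix m n R}
    {w : 𝕜 → n → R} {w' : n → R}
    (hA : ∀ i j, HasDerivAt (fun y => A y i j) (A' i j) x) (hw : HasDerivAt w w' x) :
    HasDerivAt (fun y => A y *ᵥ w y) (A' *ᵥ w x + A x *ᵥ w') x := by
  refine hasDerivAt_pi.2 fun i => ?_
  simp only [mulVec, dotProduct, Pi.add_apply, ← Finset.sum_add_distrib]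
  exact HasDerivAt.fun_sum fun j _ => (hA i j).mul (hasDerivAt_pi.1 hw j)

end EntrywiseDeriv

end Matrix

theorem hasDerivAt_div_const_sub {𝕜 : Type*} [NontriviallyNormedField 𝕜] {c x : 𝕜}
    (hx : c - x ≠ 0) : HasDerivAt (fun y => c / (c - y)) (c / (c - x) ^ 2) x := by
  refine ((hasDerivAt_const x c).fun_div ((hasDerivAt_id' x).const_sub c) hx).congr_deriv ?_
  ring

theorem hasDerivAt_diagonal_div_sub_apply {n : Type*} [DecidableEq n] {c : n → ℂ}
    (hc : ∀ j, c j ≠ 0) (i j : n) :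
    HasDerivAt (fun x : ℝ => diagonal (fun j => c j / (c j - x)) i j)
      (diagonal (fun j => (c j)⁻¹) i j) 0 := by
  refine hasDerivAt_diagonal_apply (fun j => ?_) i j
  refine (hasDerivAt_div_const_sub (x := ((0 : ℝ) : ℂ)) ?_).comp_ofReal.congr_deriv ?_
  · simpa using hc j
  · simp only [Complex.ofReal_zero, sub_zero]
    field_simp

theorem hasDerivAt_ofReal_smul_at_zero {E : Type*} [NormedAddCommGroup E] [NormedSpace ℂ E]
    {G : ℝ → E} {G' : E} (hG : HasDerivAt G G' 0) :
    HasDerivAt (fun x : ℝ => (x : ℂ) • G x) (G 0) 0 := by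
  refine ((hasDerivAt_id' (0 : ℝ)).ofReal_comp.fun_smul hG).congr_deriv ?_
  simp

theorem HasDerivAt.eq_of_eventually_scaling_eq {𝕜 R n : Type*} [NontriviallyNormedField 𝕜]
    [NormedCommRing R] [NormedAlgebra 𝕜 R] [Fintype n]
    {Z G : 𝕜 → n → R} {H : 𝕜 → Matrix n n R} {Z' G' : n → R} {H' : Matrix n n R} {a : 𝕜}
    (hZ : HasDerivAt Z Z' 0) (hH : ∀ i j, HasDerivAt (fun y => H y i j) (H' i j) 0)
    (hG : HasDerivAt G G' 0) (hZeq : ∀ᶠ y in 𝓝 0, Z y = H y *ᵥ Z (a * y) + G y) :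
    Z' = H' *ᵥ Z 0 + H 0 *ᵥ (a • Z') + G' := by
  have hmul : HasDerivAt (a * ·) a 0 := by simpa using (hasDerivAt_id' (0 : 𝕜)).const_mul a
  have hZa : HasDerivAt (fun y => Z (a * y)) (a • Z') 0 := (mul_zero a ▸ hZ).scomp (0 : 𝕜) hmul
  have hrhs := (hasDerivAt_mulVec hH hZa).fun_add hG
  rw [mul_zero] at hrhs
  exact hZ.unique (hrhs.congr_of_eventuallyEq hZeq)

theorem stmt_18_general (N : ℕ) (a : ℝ)
    (lam : Fin N → ℝ) (hlam : ∀ j, 0 < lam j)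
    (p : Fin N → Fin N → ℝ)
    (v π : Fin N → ℂ) (ε : ℝ) (hε : 0 < ε)
    (b : Fin N → ℝ → ℂ) (hbdiff : ∀ j, DifferentiableAt ℝ (b j) 0)
    (hb0 : ∀ j, b j 0 = 1)
    (L B H : ℝ → Matrix (Fin N) (Fin N) ℂ)
    (hL : ∀ x : ℝ, L x = Matrix.diagonal fun j => (lam j : ℂ) / ((lam j : ℂ) - (x : ℂ)))
    (hB : ∀ x : ℝ, B x = Matrix.diagonal fun j => b j x)
    (hH : ∀ x : ℝ, H x = L x * (Matrix.of fun i j => (p j i : ℂ)) * B x)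
    (Z : ℝ → (Fin N → ℂ)) (hZdiff : DifferentiableAt ℝ Z 0) (hZ0 : Z 0 = π)
    (hZeq : ∀ x ∈ Set.Ioo (-ε) ε,
      Z x = H x *ᵥ Z (a * x) -
        (x : ℂ) • (((Matrix.diagonal fun j => (lam j : ℂ))⁻¹ * L x) *ᵥ v)) :
    ((1 : Matrix (Fin N) (Fin N) ℂ) - (a : ℂ) • (Matrix.of fun i j => (p j i : ℂ)))
        *ᵥ deriv Z 0
      = (((Matrix.diagonal fun j => (lam j : ℂ))⁻¹ * (Matrix.of fun i j => (p j i : ℂ))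
          + (Matrix.of fun i j => (p j i : ℂ)) *
              Matrix.diagonal fun j => deriv (b j) 0) *ᵥ π)
        - (Matrix.diagonal fun j => (lam j : ℂ))⁻¹ *ᵥ v ∧
    (IsUnit ((a : ℂ) • (Matrix.of fun i j => (p j i : ℂ)) -
        (1 : Matrix (Fin N) (Fin N) ℂ)) →
      -deriv Z 0
        = ((a : ℂ) • (Matrix.of fun i j => (p j i : ℂ)) -
            (1 : Matrix (Fin N) (Fin N) ℂ))⁻¹ *ᵥ
            ((((Matrix.diagonal fun j => (lam j : ℂ))⁻¹ *
                (Matrix.of fun i j => (p j i : ℂ))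
              + (Matrix.of fun i j => (p j i : ℂ)) *
                  Matrix.diagonal fun j => deriv (b j) 0) *ᵥ π)
              - (Matrix.diagonal fun j => (lam j : ℂ))⁻¹ *ᵥ v)) := by
  set P : Matrix (Fin N) (Fin N) ℂ := of fun i j => (p j i : ℂ)
  set Λ : Matrix (Fin N) (Fin N) ℂ := diagonal fun j => (lam j : ℂ)
  set Φ := Λ⁻¹ * P + P * diagonal fun j => deriv (b j) 0
  have hlam0 : ∀ j, (lam j : ℂ) ≠ 0 := fun j => Complex.ofReal_ne_zero.2 (hlam j).ne'
  have hL0 : L 0 = 1 := by simp [hL, hlam0]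
  have hB0 : B 0 = 1 := by simp [hB, hb0]
  have hLderiv : ∀ i j, HasDerivAt (fun x => L x i j) (Λ⁻¹ i j) 0 := by
    simpa only [hL, Λ, inv_diagonal_of_ne_zero hlam0] using hasDerivAt_diagonal_div_sub_apply hlam0
  have hBderiv : ∀ i j, HasDerivAt (fun x => B x i j) (diagonal (fun j => deriv (b j) 0) i j) 0 := by
    simpa only [hB] using hasDerivAt_diagonal_apply fun j => (hbdiff j).hasDerivAt
  have hLPderiv : ∀ i j, HasDerivAt (fun x => (L x * P) i j) ((Λ⁻¹ * P) i j) 0 := fun i j =>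
    (hasDerivAt_mul_apply (B := fun _ => P) (B' := 0) hLderiv (fun _ _ => hasDerivAt_const _ _)
      i j).congr_deriv (by simp)
  have hHderiv : ∀ i j, HasDerivAt (fun x => H x i j) (Φ i j) 0 := fun i j => by
    simpa only [hH, hL0, hB0, one_mul, mul_one] using hasDerivAt_mul_apply hLPderiv hBderiv i j
  have hΛLv : HasDerivAt (fun x => (Λ⁻¹ * L x) *ᵥ v) (Λ⁻¹ *ᵥ (Λ⁻¹ *ᵥ v)) 0 := by
    have hΛL := hasDerivAt_mul_apply (A := fun _ => Λ⁻¹) (A' := 0)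
      (fun _ _ => hasDerivAt_const _ _) hLderiv
    simpa [hL0, mulVec_mulVec] using hasDerivAt_mulVec hΛL (hasDerivAt_const (0 : ℝ) v)
  have hG := (hasDerivAt_ofReal_smul_at_zero hΛLv).neg
  have hZeq' : ∀ᶠ x in 𝓝 0, Z x = H x *ᵥ Z (a * x) + -((x : ℂ) • ((Λ⁻¹ * L x) *ᵥ v)) := by
    filter_upwards [Ioo_mem_nhds (neg_neg_of_pos hε) hε] with x hx
    rw [hZeq x hx, sub_eq_add_neg]
  have key := hZdiff.hasDerivAt.eq_of_eventually_scaling_eq hHderiv hG hZeq'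
  simp only [hH, hL0, hB0, one_mul, mul_one, hZ0, mulVec_smul, ← Complex.coe_smul] at key
  have part1 : (1 - (a : ℂ) • P) *ᵥ deriv Z 0 = Φ *ᵥ π - Λ⁻¹ *ᵥ v := by
    rw [sub_mulVec, one_mulVec, smul_mulVec]
    linear_combination (norm := module) key
  refine ⟨part1, fun hU => ?_⟩
  obtain ⟨_⟩ := hU.nonempty_invertible
  refine (inv_mulVec_eq_vec ?_).symm
  rw [← part1, ← neg_sub, neg_mulVec, mulVec_neg]

/-- Steady-state mean-workload formula of Section 2.1:
`M̃ = (Pᵀ a − I)⁻¹ (Φ π̃ − Λ⁻¹ ṽ)` with `Φ = Λ⁻¹ Pᵀ + Pᵀ B*'(0)`, obtained by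
differentiating `Z(s) = H(s) Z(a s) − s Λ⁻¹ L(s) v` at `s = 0`. -/
theorem stmt_18 (N : ℕ) (hN : 1 ≤ N) (a : ℝ) (ha : a ∈ Set.Ioo (0:ℝ) 1)
    (lam : Fin N → ℝ) (hlam : ∀ j, 0 < lam j)
    (p : Fin N → Fin N → ℝ) (hp0 : ∀ i j, 0 ≤ p i j) (hp1 : ∀ i, ∑ j, p i j = 1)
    (v π : Fin N → ℂ) (ε : ℝ) (hε : 0 < ε) (hεlam : ∀ j, ε < lam j)
    (b : Fin N → ℝ → ℂ) (hbdiff : ∀ j, DifferentiableAt ℝ (b j) 0)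
    (hb0 : ∀ j, b j 0 = 1)
    (L B H : ℝ → Matrix (Fin N) (Fin N) ℂ)
    (hL : ∀ x : ℝ, L x = Matrix.diagonal fun j => (lam j : ℂ) / ((lam j : ℂ) - (x : ℂ)))
    (hB : ∀ x : ℝ, B x = Matrix.diagonal fun j => b j x)
    (hH : ∀ x : ℝ, H x = L x * (Matrix.of fun i j => (p j i : ℂ)) * B x)
    (Z : ℝ → (Fin N → ℂ)) (hZdiff : DifferentiableAt ℝ Z 0) (hZ0 : Z 0 = π)
    (hZeq : ∀ x ∈ Set.Ioo (-ε) ε,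
      Z x = H x *ᵥ Z (a * x) -
        (x : ℂ) • (((Matrix.diagonal fun j => (lam j : ℂ))⁻¹ * L x) *ᵥ v)) :
    ((1 : Matrix (Fin N) (Fin N) ℂ) - (a : ℂ) • (Matrix.of fun i j => (p j i : ℂ)))
        *ᵥ deriv Z 0
      = (((Matrix.diagonal fun j => (lam j : ℂ))⁻¹ * (Matrix.of fun i j => (p j i : ℂ))
          + (Matrix.of fun i j => (p j i : ℂ)) *
              Matrix.diagonal fun j => deriv (b j) 0) *ᵥ π)
        - (Matrix.diagonal fun j => (lam j : ℂ))⁻¹ *ᵥ v ∧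
    (IsUnit ((a : ℂ) • (Matrix.of fun i j => (p j i : ℂ)) -
        (1 : Matrix (Fin N) (Fin N) ℂ)) →
      -deriv Z 0
        = ((a : ℂ) • (Matrix.of fun i j => (p j i : ℂ)) -
            (1 : Matrix (Fin N) (Fin N) ℂ))⁻¹ *ᵥ
            ((((Matrix.diagonal fun j => (lam j : ℂ))⁻¹ *
                (Matrix.of fun i j => (p j i : ℂ))
              + (Matrix.of fun i j => (p j i : ℂ)) *
                  Matrix.diagonal fun j => deriv (b j) 0) *ᵥ π)
              - (Matrix.diagonal fun j => (lam j : ℂ))⁻¹ *ᵥ v)) :=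
  stmt_18_general N a lam hlam p v π ε hε b hbdiff hb0 L B H hL hB hH Z hZdiff hZ0 hZeq
end
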